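/- arXiv:1307.6540 — 4 statements merged into one kernel-verified Lean document; each statement's English description precedes it below -/
import Mathlib

section
/- Let c : ℝ^d × ℝ^d → [0,∞) be Borel measurable, symmetric (c(x,y) = c(y,x)) and bounded, with ‖c‖_∞ its supremum. Let μ be a Borel probability measure on ℝ^d. Then for every N ≥ 2, F_∞^OT[μ] − ‖c‖_∞/N ≤ F_N^OT[μ] ≤ F_∞^OT[μ]; in particular lim_{N→∞} F_N^OT[μ] = F_∞^OT[μ]. -/
open MeasureTheory ENNReal Filter Topology ProbabilityTheory

noncomputable section

/-- `ℝ^d` with the Euclidean norm. -/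
abbrev Ed (d : ℕ) := EuclideanSpace ℝ (Fin d)

/-- A Borel probability measure on the countable product `(ℝ^d)^ℕ` is *exchangeable*
(symmetric) if it is invariant under every finite permutation of the coordinates. -/
def IsExchangeable {d : ℕ} (γ : Measure (ℕ → Ed d)) : Prop :=
  ∀ σ : Equiv.Perm ℕ, {n : ℕ | σ n ≠ n}.Finite →
    γ.map (fun x n => x (σ n)) = γ

/-- `γ ↦ μ` : the pushforward of `γ` under every coordinate projection is `μ`. -/
def HasMarginal {d : ℕ} (γ : Measure (ℕ → Ed d)) (μ : Measure (Ed d)) : Prop :=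
  ∀ n : ℕ, γ.map (fun x => x n) = μ

/-- The infinite-body cost `C_∞[γ] = ∫ c(x₁,x₂) dγ`. -/
def Cinf {d : ℕ} (c : Ed d → Ed d → ℝ≥0∞) (γ : Measure (ℕ → Ed d)) : ℝ≥0∞ :=
  ∫⁻ x, c (x 0) (x 1) ∂γ

/-- The optimal cost of the infinite-body optimal transport problem,
`F_∞^OT[μ] = inf { C_∞[γ] : γ ∈ P_sym^∞(ℝ^d), γ ↦ μ }`. -/
def FinfOT {d : ℕ} (c : Ed d → Ed d → ℝ≥0∞) (μ : Measure (Ed d)) : ℝ≥0∞ :=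
  ⨅ (γ : Measure (ℕ → Ed d)) (_ : IsProbabilityMeasure γ) (_ : IsExchangeable γ)
    (_ : HasMarginal γ μ), Cinf c γ

/-- A measure on `(ℝ^d)^N` is symmetric if it is invariant under all permutations
of the coordinates. -/
def IsSymmetricN {d N : ℕ} (γ : Measure (Fin N → Ed d)) : Prop :=
  ∀ σ : Equiv.Perm (Fin N), γ.map (fun x i => x (σ i)) = γ

/-- The `N`-body cost `Σ_{1 ≤ i < j ≤ N} c(x_i, x_j)`. -/
def pairCost {d N : ℕ} (c : Ed d → Ed d → ℝ≥0∞) (x : Fin N → Ed d) : ℝ≥0∞ :=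
  ∑ i : Fin N, ∑ j : Fin N, if i < j then c (x i) (x j) else 0

/-- The optimal cost per particle pair of the `N`-body optimal transport problem:
`F_N^OT[μ] = (1/binom(N,2)) inf { ∫ Σ_{i<j} c(x_i,x_j) dγ_N : γ_N ∈ P_sym^N(ℝ^d), γ_N ↦ μ }`. -/
def FNOT {d : ℕ} (N : ℕ) (c : Ed d → Ed d → ℝ≥0∞) (μ : Measure (Ed d)) : ℝ≥0∞ :=
  (N.choose 2 : ℝ≥0∞)⁻¹ *
    ⨅ (γ : Measure (Fin N → Ed d)) (_ : IsProbabilityMeasure γ) (_ : IsSymmetricN γ)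
      (_ : ∀ i : Fin N, γ.map (fun x => x i) = μ), ∫⁻ x, pairCost c x ∂γ

namespace NBodyAux

open MeasureTheory.Measure

/-! ### Permutation helpers -/

theorem exists_perm_zero_one (i j : ℕ) (hij : i ≠ j) :
    ∃ τ : Equiv.Perm ℕ, {n : ℕ | τ n ≠ n}.Finite ∧ τ 0 = i ∧ τ 1 = j := by
  classical
  set s1 := Equiv.swap 0 i with hs1
  set b := s1 1 with hb
  set s2 := Equiv.swap b j with hs2
  have h10 : s1 0 = i := Equiv.swap_apply_left 0 i
  have hib : i ≠ b := by
    intro h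
    exact zero_ne_one (s1.injective (by rw [h10, h]))
  refine ⟨s2 * s1, ?_, ?_, ?_⟩
  · refine Set.Finite.subset (Set.Finite.insert 0 (Set.Finite.insert i
      (Set.Finite.insert b (Set.finite_singleton j)))) ?_
    intro n hn
    simp only [Set.mem_setOf_eq, Equiv.Perm.mul_apply] at hn
    by_contra hmem
    simp only [Set.mem_insert_iff, Set.mem_singleton_iff, not_or] at hmem
    obtain ⟨h0, hi, hbn, hj⟩ := hmem
    rw [Equiv.swap_apply_of_ne_of_ne h0 hi, Equiv.swap_apply_of_ne_of_ne hbn hj] at hn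
    exact hn rfl
  · simp only [Equiv.Perm.mul_apply]
    rw [h10, Equiv.swap_apply_of_ne_of_ne hib hij]
  · simp only [Equiv.Perm.mul_apply]
    rw [← hb, Equiv.swap_apply_left]

def extendPerm {N : ℕ} (σ : Equiv.Perm (Fin N)) : Equiv.Perm ℕ :=
  σ.extendDomain Fin.equivSubtype

theorem extendPerm_apply {N : ℕ} (σ : Equiv.Perm (Fin N)) (i : Fin N) :
    extendPerm σ (i : ℕ) = (σ i : ℕ) := by
  have h := Equiv.Perm.extendDomain_apply_image σ (Fin.equivSubtype) i
  simpa [extendPerm, Fin.equivSubtype] using h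

theorem extendPerm_support {N : ℕ} (σ : Equiv.Perm (Fin N)) :
    {n : ℕ | extendPerm σ n ≠ n}.Finite := by
  refine Set.Finite.subset (Set.finite_Iio N) ?_
  intro n hn
  simp only [Set.mem_setOf_eq] at hn
  by_contra h
  exact hn (Equiv.Perm.extendDomain_apply_not_subtype σ Fin.equivSubtype
    (by simpa using h))


/-! ### The i.i.d. uniform index sequence, via Haar measure on `(ZMod N)^ℕ` -/

abbrev IdxG (N : ℕ) := ℕ → ZMod N

def K0 (N : ℕ) [NeZero N] : TopologicalSpace.PositiveCompacts (IdxG N) :=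
  ⟨⟨Set.univ, isCompact_univ⟩, by simp⟩

def nu (N : ℕ) [NeZero N] : Measure (IdxG N) := addHaarMeasure (K0 N)

instance (N : ℕ) [NeZero N] : IsProbabilityMeasure (nu N) :=
  ⟨by simpa [K0, nu] using addHaarMeasure_self (K₀ := K0 N)⟩

instance (N : ℕ) [NeZero N] : IsAddLeftInvariant (nu N) := by
  unfold nu; infer_instance

theorem measurable_add_left_IdxG {N : ℕ} [NeZero N] (g : IdxG N) :
    Measurable fun u : IdxG N => g + u := by
  apply measurable_pi_lambda
  intro n
  exact (measurable_of_countable fun z : ZMod N => g n + z).comp (measurable_pi_apply n)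

theorem eq_nu (N : ℕ) [NeZero N] (μ : Measure (IdxG N)) [IsProbabilityMeasure μ]
    (h : ∀ g : IdxG N, μ.map (g + ·) = μ) : μ = nu N := by
  haveI : IsAddLeftInvariant μ := ⟨h⟩
  have h2 := addHaarMeasure_unique μ (K0 N)
  have h3 : μ ↑(K0 N) = 1 := by simpa [K0] using measure_univ (μ := μ)
  rw [h2, h3, one_smul, nu]

theorem map_nu_invariant (N : ℕ) [NeZero N] {H : Type*} [AddGroup H] [MeasurableSpace H]
    (f : IdxG N → H) (hf : Measurable f)
    (hadd : ∀ h : H, Measurable fun x : H => h + x)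
    (hcomm : ∀ h : H, ∃ g : IdxG N, ∀ u, h + f u = f (g + u)) (h : H) :
    ((nu N).map f).map (h + ·) = (nu N).map f := by
  obtain ⟨g, hg⟩ := hcomm h
  rw [Measure.map_map (hadd h) hf]
  have heq : ((h + ·) ∘ f) = f ∘ (g + ·) := funext fun u => hg u
  rw [heq, ← Measure.map_map hf (measurable_add_left_IdxG g),
    IsAddLeftInvariant.map_add_left_eq_self (μ := nu N) g]

theorem uniform_of_invariant {H : Type*} [AddCommGroup H] [Fintype H] [MeasurableSpace H]
    [MeasurableSingletonClass H] (μ : Measure H) [IsProbabilityMeasure μ]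
    (hinv : ∀ g : H, μ.map (g + ·) = μ) (a : H) :
    μ {a} = (Fintype.card H : ℝ≥0∞)⁻¹ := by
  classical
  have key : ∀ b : H, μ {b} = μ {a} := by
    intro b
    have hset : ∀ x : H, (b - a) + x = b ↔ x = a := by
      intro x
      constructor
      · intro h
        apply add_left_cancel (a := b - a)
        rw [h]; abel
      · rintro rfl; abel
    calc μ {b} = (μ.map ((b - a) + ·)) {b} := by rw [hinv (b - a)]
      _ = μ ((fun x => (b - a) + x) ⁻¹' {b}) :=
          Measure.map_apply (measurable_of_countable _) (measurableSet_singleton b)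
      _ = μ {a} := by
          congr 1
          ext x
          simp [hset x]
  have hsum : ∑ b : H, μ {b} = 1 := by
    have h1 := lintegral_fintype (μ := μ) (fun _ => (1 : ℝ≥0∞))
    simpa using h1.symm
  have hcardsum : (Fintype.card H : ℝ≥0∞) * μ {a} = 1 := by
    rw [← hsum]
    rw [Finset.sum_congr rfl fun b _ => key b, Finset.sum_const, Finset.card_univ,
      nsmul_eq_mul]
  have hc0 : (Fintype.card H : ℝ≥0∞) ≠ 0 := by
    simp [Fintype.card_ne_zero]
  have hct : (Fintype.card H : ℝ≥0∞) ≠ ⊤ := natCast_ne_top _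
  calc μ {a} = (Fintype.card H : ℝ≥0∞)⁻¹ * ((Fintype.card H : ℝ≥0∞) * μ {a}) := by
        rw [← mul_assoc, ENNReal.inv_mul_cancel hc0 hct, one_mul]
    _ = (Fintype.card H : ℝ≥0∞)⁻¹ := by rw [hcardsum, mul_one]


variable {N : ℕ} [NeZero N]

-- index conversion
def idx (z : ZMod N) : Fin N := ⟨z.val, ZMod.val_lt z⟩

theorem idx_bijective : Function.Bijective (idx (N := N)) := by
  rw [Fintype.bijective_iff_injective_and_card]
  refine ⟨fun a b h => ?_, by simp [ZMod.card]⟩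
  have : (a : ZMod N).val = b.val := congrArg Fin.val h
  exact ZMod.val_injective N this

/-- single-coordinate marginal of `nu` is uniform -/
theorem nu_map_eval (n : ℕ) (a : ZMod N) :
    ((nu N).map (fun u : IdxG N => u n)) {a} = (N : ℝ≥0∞)⁻¹ := by
  have hf : Measurable fun u : IdxG N => u n := measurable_pi_apply n
  haveI : IsProbabilityMeasure ((nu N).map (fun u : IdxG N => u n)) :=
    isProbabilityMeasure_map hf.aemeasurable
  have hinv : ∀ h : ZMod N,
      ((nu N).map (fun u : IdxG N => u n)).map (h + ·) = (nu N).map (fun u : IdxG N => u n) :=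
    fun h => map_nu_invariant N _ hf (fun _ => measurable_of_countable _)
      (fun h => ⟨fun _ => h, fun _ => rfl⟩) h
  have := uniform_of_invariant _ hinv a
  rwa [ZMod.card] at this

/-- pair marginal of `nu` is uniform on the product -/
theorem nu_map_pair (a : ZMod N × ZMod N) :
    ((nu N).map (fun u : IdxG N => (u 0, u 1))) {a} = ((N : ℝ≥0∞) * N)⁻¹ := by
  have hf : Measurable fun u : IdxG N => (u 0, u 1) :=
    (measurable_pi_apply 0).prodMk (measurable_pi_apply 1)
  haveI : IsProbabilityMeasure ((nu N).map (fun u : IdxG N => (u 0, u 1))) :=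
    isProbabilityMeasure_map hf.aemeasurable
  have hinv : ∀ h : ZMod N × ZMod N,
      ((nu N).map (fun u : IdxG N => (u 0, u 1))).map (h + ·)
        = (nu N).map (fun u : IdxG N => (u 0, u 1)) := by
    intro h
    refine map_nu_invariant N _ hf (fun _ => measurable_of_countable _) (fun h => ?_) h
    refine ⟨fun m => if m = 0 then h.1 else h.2, fun u => ?_⟩
    have h0 : (fun m : ℕ => if m = 0 then h.1 else h.2) 0 = h.1 := by simp
    have h1 : (fun m : ℕ => if m = 0 then h.1 else h.2) 1 = h.2 := by simp
    refine Prod.ext ?_ ?_ <;> simp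
  have := uniform_of_invariant _ hinv a
  rw [this, Fintype.card_prod, ZMod.card]
  push_cast
  ring_nf

/-- `nu` is invariant under arbitrary permutations of the coordinates. -/
theorem nu_perm_invariant (σ : Equiv.Perm ℕ) :
    (nu N).map (fun u : IdxG N => fun n => u (σ n)) = nu N := by
  have hT : Measurable fun u : IdxG N => fun n => u (σ n) :=
    measurable_pi_lambda _ fun n => measurable_pi_apply (σ n)
  haveI : IsProbabilityMeasure ((nu N).map (fun u : IdxG N => fun n => u (σ n))) :=
    isProbabilityMeasure_map hT.aemeasurable
  refine eq_nu N _ ?_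
  intro g
  refine map_nu_invariant N _ hT (fun h => ?_) (fun h => ?_) g
  · apply measurable_pi_lambda
    intro n
    exact (measurable_of_countable fun z : ZMod N => h n + z).comp (measurable_pi_apply n)
  · refine ⟨fun m => h (σ.symm m), fun u => ?_⟩
    funext n
    simp [Pi.add_apply]


theorem sum_ite_lt (N : ℕ) (a : ℝ≥0∞) :
    (∑ k : Fin N, ∑ l : Fin N, if k < l then a else 0) = (N.choose 2 : ℕ) * a := by
  classical
  rw [Finset.sum_comm]
  have h1 : ∀ l : Fin N, (∑ k : Fin N, if k < l then a else 0) = ((l : ℕ) : ℝ≥0∞) * a := by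
    intro l
    rw [Finset.sum_ite, Finset.sum_const_zero, add_zero, Finset.sum_const, nsmul_eq_mul]
    congr 1
    have : (Finset.univ.filter fun k : Fin N => k < l) = Finset.Iio l := by
      ext k; simp [Finset.mem_Iio]
    rw [this, Fin.card_Iio]
  calc (∑ l : Fin N, ∑ k : Fin N, if k < l then a else 0)
      = ∑ l : Fin N, ((l : ℕ) : ℝ≥0∞) * a := Finset.sum_congr rfl fun l _ => h1 l
    _ = ((∑ l : Fin N, (l : ℕ) : ℕ) : ℝ≥0∞) * a := by
        rw [← Finset.sum_mul]; congr 1; push_cast; ring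
    _ = (N.choose 2 : ℕ) * a := by
        congr 2
        rw [Fin.sum_univ_eq_sum_range (fun i => i) N, Finset.sum_range_id,
          Nat.choose_two_right]

/-- trichotomy splitting of a term -/
theorem tri_split {N : ℕ} (k l : Fin N) (v : ℝ≥0∞) :
    v = (if k = l then v else 0) + (if k < l then v else 0) + (if l < k then v else 0) := by
  rcases lt_trichotomy k l with h | h | h
  · simp [h, h.ne, lt_asymm h]
  · simp [h, lt_irrefl]
  · simp [h, (h.ne).symm, lt_asymm h, h.ne']

theorem two_mul_choose_two_le (N : ℕ) : 2 * N.choose 2 ≤ N * N := by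
  rcases Nat.eq_zero_or_pos N with h | h
  · simp [h]
  have heven : Even (N * (N - 1)) := by
    have : N * (N - 1) = (N - 1) * ((N - 1) + 1) := by
      rw [Nat.sub_add_cancel h, Nat.mul_comm]
    rw [this]
    exact Nat.even_mul_succ_self _
  have h2 : 2 * N.choose 2 = N * (N - 1) := by
    rw [Nat.choose_two_right, Nat.mul_comm, Nat.div_mul_cancel heven.two_dvd]
  rw [h2]
  exact Nat.mul_le_mul_left N (Nat.sub_le N 1)

theorem inv_sq_le_inv_choose (N : ℕ) (hN : 2 ≤ N) :
    2 * ((N : ℝ≥0∞) * N)⁻¹ ≤ ((N.choose 2 : ℕ) : ℝ≥0∞)⁻¹ := by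
  have hN0 : ((N : ℝ≥0∞) * N) ≠ 0 := by
    simp only [ne_eq, mul_eq_zero, Nat.cast_eq_zero, or_self]
    omega
  have hNt : ((N : ℝ≥0∞) * N) ≠ ⊤ := by
    exact ENNReal.mul_ne_top (natCast_ne_top N) (natCast_ne_top N)
  rw [ENNReal.le_inv_iff_mul_le]
  have : 2 * ((N : ℝ≥0∞) * N)⁻¹ * ((N.choose 2 : ℕ) : ℝ≥0∞)
      = ((N : ℝ≥0∞) * N)⁻¹ * (2 * ((N.choose 2 : ℕ) : ℝ≥0∞)) := by ring
  rw [this]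
  have hle : (2 * ((N.choose 2 : ℕ) : ℝ≥0∞)) ≤ (N : ℝ≥0∞) * N := by
    have := two_mul_choose_two_le N
    calc 2 * ((N.choose 2 : ℕ) : ℝ≥0∞) = ((2 * N.choose 2 : ℕ) : ℝ≥0∞) := by push_cast; ring
      _ ≤ ((N * N : ℕ) : ℝ≥0∞) := by exact_mod_cast Nat.cast_le.mpr this
      _ = (N : ℝ≥0∞) * N := by push_cast; ring
  calc ((N : ℝ≥0∞) * N)⁻¹ * (2 * ((N.choose 2 : ℕ) : ℝ≥0∞))
      ≤ ((N : ℝ≥0∞) * N)⁻¹ * ((N : ℝ≥0∞) * N) := mul_le_mul_right hle _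
    _ = 1 := ENNReal.inv_mul_cancel hN0 hNt

theorem choose_cast_ne_zero (N : ℕ) (hN : 2 ≤ N) : ((N.choose 2 : ℕ) : ℝ≥0∞) ≠ 0 := by
  simp [Nat.choose_eq_zero_iff]
  omega


variable {d : ℕ}

theorem lint_pair (cc : Ed d → Ed d → ℝ≥0∞)
    (hcc : Measurable fun q : Ed d × Ed d => cc q.1 q.2)
    (γ : Measure (ℕ → Ed d)) (hexch : IsExchangeable γ) {i j : ℕ} (hij : i ≠ j) :
    ∫⁻ y, cc (y i) (y j) ∂γ = Cinf cc γ := by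
  obtain ⟨τ, hfin, h0, h1⟩ := exists_perm_zero_one i j hij
  have hT : Measurable fun y : ℕ → Ed d => fun n => y (τ n) :=
    measurable_pi_lambda _ fun n => measurable_pi_apply (τ n)
  have h01 : Measurable fun y : ℕ → Ed d => (y 0, y 1) :=
    (measurable_pi_apply 0).prodMk (measurable_pi_apply 1)
  have hint : Measurable fun y : ℕ → Ed d => cc (y 0) (y 1) := hcc.comp h01
  have key : ∫⁻ y, cc (y 0) (y 1) ∂(γ.map fun y n => y (τ n))
      = ∫⁻ y, cc (y (τ 0)) (y (τ 1)) ∂γ := lintegral_map hint hT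
  rw [hexch τ hfin, h0, h1] at key
  exact key.symm

theorem FNOT_le_Cinf {N : ℕ} (hN : 2 ≤ N) (cc : Ed d → Ed d → ℝ≥0∞)
    (hcc : Measurable fun q : Ed d × Ed d => cc q.1 q.2)
    (μ : Measure (Ed d)) [IsProbabilityMeasure μ]
    (γ : Measure (ℕ → Ed d)) [IsProbabilityMeasure γ]
    (hexch : IsExchangeable γ) (hmarg : HasMarginal γ μ) :
    FNOT N cc μ ≤ Cinf cc γ := by
  classical
  have hrestr : Measurable fun y : ℕ → Ed d => fun i : Fin N => y (i : ℕ) :=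
    measurable_pi_lambda _ fun i => measurable_pi_apply _
  set γN : Measure (Fin N → Ed d) := γ.map (fun y (i : Fin N) => y (i : ℕ)) with hγN
  haveI : IsProbabilityMeasure γN := isProbabilityMeasure_map hrestr.aemeasurable
  -- symmetry
  have hsymmN : IsSymmetricN γN := by
    intro σ
    have hperm : Measurable fun x : Fin N → Ed d => fun i => x (σ i) :=
      measurable_pi_lambda _ fun i => measurable_pi_apply _
    rw [hγN, Measure.map_map hperm hrestr]
    have hT : Measurable fun y : ℕ → Ed d => fun n => y (extendPerm σ n) :=
      measurable_pi_lambda _ fun n => measurable_pi_apply _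
    have hcomp : ((fun x : Fin N → Ed d => fun i => x (σ i)) ∘
        fun (y : ℕ → Ed d) (i : Fin N) => y (i : ℕ)) =
        (fun (y : ℕ → Ed d) (i : Fin N) => y (i : ℕ)) ∘
          (fun (y : ℕ → Ed d) (n : ℕ) => y (extendPerm σ n)) := by
      funext y
      funext i
      simp [Function.comp, extendPerm_apply]
    rw [hcomp, ← Measure.map_map hrestr hT, hexch (extendPerm σ) (extendPerm_support σ)]
  -- marginals
  have hmargN : ∀ i : Fin N, γN.map (fun x => x i) = μ := by
    intro i
    rw [hγN, Measure.map_map (measurable_pi_apply i) hrestr]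
    exact hmarg (i : ℕ)
  -- cost identity
  have hint2 : ∀ p : Fin N × Fin N,
      Measurable fun x : Fin N → Ed d => cc (x p.1) (x p.2) := by
    intro p
    have hp : Measurable fun x : Fin N → Ed d => (x p.1, x p.2) :=
      (measurable_pi_apply p.1).prodMk (measurable_pi_apply p.2)
    exact hcc.comp hp
  have hcost : ∫⁻ x, pairCost cc x ∂γN = ((N.choose 2 : ℕ) : ℝ≥0∞) * Cinf cc γ := by
    have hpc : ∀ x : Fin N → Ed d, pairCost cc x
        = ∑ p : Fin N × Fin N, if p.1 < p.2 then cc (x p.1) (x p.2) else 0 := by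
      intro x
      rw [pairCost, Fintype.sum_prod_type]
    rw [lintegral_congr hpc, lintegral_finset_sum]
    · have hterm : ∀ p : Fin N × Fin N,
          ∫⁻ x, (if p.1 < p.2 then cc (x p.1) (x p.2) else 0) ∂γN
          = if p.1 < p.2 then Cinf cc γ else 0 := by
        intro p
        by_cases h : p.1 < p.2
        · simp only [if_pos h]
          rw [hγN, lintegral_map (hint2 p) hrestr]
          exact lint_pair cc hcc γ hexch (by
            intro hc
            exact absurd (Fin.val_eq_val p.1 p.2 |>.mp hc) (ne_of_lt h))
        · simp [h]
      rw [Finset.sum_congr rfl fun p _ => hterm p, Fintype.sum_prod_type,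
        sum_ite_lt N (Cinf cc γ)]
    · intro p _
      by_cases h : p.1 < p.2
      · simpa [if_pos h] using hint2 p
      · simp [h]
  -- conclude
  have hInf : (⨅ (γ' : Measure (Fin N → Ed d)) (_ : IsProbabilityMeasure γ')
      (_ : IsSymmetricN γ') (_ : ∀ i : Fin N, γ'.map (fun x => x i) = μ),
      ∫⁻ x, pairCost cc x ∂γ') ≤ ((N.choose 2 : ℕ) : ℝ≥0∞) * Cinf cc γ := by
    refine iInf_le_of_le γN (iInf_le_of_le ‹_› (iInf_le_of_le hsymmN
      (iInf_le_of_le hmargN ?_)))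
    exact le_of_eq hcost
  calc FNOT N cc μ ≤ (N.choose 2 : ℝ≥0∞)⁻¹ * (((N.choose 2 : ℕ) : ℝ≥0∞) * Cinf cc γ) := by
        rw [FNOT]; exact mul_le_mul_right hInf _
    _ = Cinf cc γ := by
        rw [← mul_assoc]
        norm_cast
        rw [ENNReal.inv_mul_cancel (choose_cast_ne_zero N hN) (natCast_ne_top _), one_mul]


/-- The `N`-body pair cost as a sum of pair integrals. -/
theorem lintegral_pairCost {N : ℕ} (cc : Ed d → Ed d → ℝ≥0∞)
    (hcc : Measurable fun q : Ed d × Ed d => cc q.1 q.2)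
    (γN : Measure (Fin N → Ed d)) :
    ∫⁻ x, pairCost cc x ∂γN
      = ∑ k : Fin N, ∑ l : Fin N, if k < l then ∫⁻ x, cc (x k) (x l) ∂γN else 0 := by
  classical
  have hint2 : ∀ p : Fin N × Fin N,
      Measurable fun x : Fin N → Ed d => cc (x p.1) (x p.2) := by
    intro p
    have hp : Measurable fun x : Fin N → Ed d => (x p.1, x p.2) :=
      (measurable_pi_apply p.1).prodMk (measurable_pi_apply p.2)
    exact hcc.comp hp
  have hpc : ∀ x : Fin N → Ed d, pairCost cc x
      = ∑ p : Fin N × Fin N, if p.1 < p.2 then cc (x p.1) (x p.2) else 0 := by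
    intro x
    rw [pairCost, Fintype.sum_prod_type]
  have hmeas : ∀ p ∈ (Finset.univ : Finset (Fin N × Fin N)), Measurable fun x : Fin N → Ed d =>
      if p.1 < p.2 then cc (x p.1) (x p.2) else 0 := by
    intro p _
    by_cases h : p.1 < p.2
    · simpa [if_pos h] using hint2 p
    · simp [h]
  rw [lintegral_congr hpc, lintegral_finset_sum _ hmeas, Fintype.sum_prod_type]
  refine Finset.sum_congr rfl fun k _ => Finset.sum_congr rfl fun l _ => ?_
  by_cases h : k < l
  · simp [h]
  · simp [h]

theorem FinfOT_le_bound {N : ℕ} (hN : 2 ≤ N)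
    (cc : Ed d → Ed d → ℝ≥0∞)
    (hcc : Measurable fun q : Ed d × Ed d => cc q.1 q.2)
    (hsymc : ∀ x y, cc x y = cc y x)
    (Me : ℝ≥0∞) (hbdd : ∀ x y, cc x y ≤ Me)
    (μ : Measure (Ed d)) [IsProbabilityMeasure μ]
    (γN : Measure (Fin N → Ed d)) [IsProbabilityMeasure γN]
    (hmarg : ∀ i : Fin N, γN.map (fun x => x i) = μ) :
    FinfOT cc μ ≤ ((N.choose 2 : ℕ) : ℝ≥0∞)⁻¹ * (∫⁻ x, pairCost cc x ∂γN)
      + Me * (N : ℝ≥0∞)⁻¹ := by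
  classical
  haveI : NeZero N := ⟨by omega⟩
  have hN0 : ((N : ℝ≥0∞)) ≠ 0 := by
    simp only [ne_eq, Nat.cast_eq_zero]; omega
  have hNt : ((N : ℝ≥0∞)) ≠ ⊤ := natCast_ne_top N
  -- the evaluation map and the competitor measure
  have he : Measurable fun q : (Fin N → Ed d) × ZMod N => q.1 (idx q.2) :=
    measurable_from_prod_countable_left fun z => measurable_pi_apply (idx z)
  set Φ : (Fin N → Ed d) × IdxG N → (ℕ → Ed d) :=
    fun p => fun n => p.1 (idx (p.2 n)) with hΦdef
  have hΦ : Measurable Φ := by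
    apply measurable_pi_lambda
    intro n
    exact he.comp (measurable_fst.prodMk ((measurable_pi_apply n).comp measurable_snd))
  set P : Measure (ℕ → Ed d) := (γN.prod (nu N)).map Φ with hPdef
  haveI : IsProbabilityMeasure P := isProbabilityMeasure_map hΦ.aemeasurable
  -- exchangeability of P
  have hPexch : IsExchangeable P := by
    intro σ _
    have hS : Measurable fun y : ℕ → Ed d => fun n => y (σ n) :=
      measurable_pi_lambda _ fun n => measurable_pi_apply _
    have hTσ : Measurable fun u : IdxG N => fun n => u (σ n) :=
      measurable_pi_lambda _ fun n => measurable_pi_apply _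
    rw [hPdef, Measure.map_map hS hΦ]
    have hcomp : ((fun y : ℕ → Ed d => fun n => y (σ n)) ∘ Φ)
        = Φ ∘ (Prod.map id fun u : IdxG N => fun n => u (σ n)) := rfl
    rw [hcomp, ← Measure.map_map hΦ (measurable_id.prodMap hTσ),
      ← Measure.map_prod_map _ _ measurable_id hTσ, Measure.map_id,
      nu_perm_invariant σ]
  -- marginals of P
  have hPmarg : HasMarginal P μ := by
    intro n
    have hev : Measurable fun u : IdxG N => u n := measurable_pi_apply n
    rw [hPdef, Measure.map_map (measurable_pi_apply n) hΦ]
    have hcomp2 : ((fun y : ℕ → Ed d => y n) ∘ Φ)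
        = (fun q : (Fin N → Ed d) × ZMod N => q.1 (idx q.2))
          ∘ (Prod.map id fun u : IdxG N => u n) := rfl
    rw [hcomp2, ← Measure.map_map he (measurable_id.prodMap hev),
      ← Measure.map_prod_map _ _ measurable_id hev, Measure.map_id]
    set m1 := (nu N).map (fun u : IdxG N => u n) with hm1
    haveI : IsProbabilityMeasure m1 := isProbabilityMeasure_map hev.aemeasurable
    ext A hA
    rw [Measure.map_apply he hA, Measure.prod_apply (he hA)]
    have hm1S : ∀ x : Fin N → Ed d,
        m1 (Prod.mk x ⁻¹' ((fun q : (Fin N → Ed d) × ZMod N => q.1 (idx q.2)) ⁻¹' A))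
          = ∑ z : ZMod N, (if x (idx z) ∈ A then (1 : ℝ≥0∞) else 0) * (N : ℝ≥0∞)⁻¹ := by
      intro x
      have hset : (Prod.mk x ⁻¹' ((fun q : (Fin N → Ed d) × ZMod N => q.1 (idx q.2)) ⁻¹' A))
          = {z : ZMod N | x (idx z) ∈ A} := rfl
      have hSm : MeasurableSet {z : ZMod N | x (idx z) ∈ A} := .of_discrete
      rw [hset, ← lintegral_indicator_one hSm, lintegral_fintype]
      refine Finset.sum_congr rfl fun z _ => ?_
      rw [hm1, nu_map_eval n z]
      congr 1
    have hind : ∀ z : ZMod N, (fun x : Fin N → Ed d => if x (idx z) ∈ A then (1 : ℝ≥0∞) else 0)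
        = ((fun x : Fin N → Ed d => x (idx z)) ⁻¹' A).indicator fun _ => 1 := by
      intro z
      funext x
      simp [Set.indicator_apply, Set.mem_preimage]
    have hmeasind : ∀ z : ZMod N, Measurable fun x : Fin N → Ed d =>
        if x (idx z) ∈ A then (1 : ℝ≥0∞) else 0 := by
      intro z
      rw [hind z]
      exact measurable_const.indicator (measurable_pi_apply (idx z) hA)
    have hfs : ∫⁻ x, ∑ z : ZMod N, (if x (idx z) ∈ A then (1 : ℝ≥0∞) else 0) * (N : ℝ≥0∞)⁻¹ ∂γN
        = ∑ z : ZMod N, ∫⁻ x, (if x (idx z) ∈ A then (1 : ℝ≥0∞) else 0) * (N : ℝ≥0∞)⁻¹ ∂γN :=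
      lintegral_finset_sum _ fun z _ => (hmeasind z).mul_const _
    have hterm : ∀ z : ZMod N,
        ∫⁻ x, (if x (idx z) ∈ A then (1 : ℝ≥0∞) else 0) * (N : ℝ≥0∞)⁻¹ ∂γN
          = μ A * (N : ℝ≥0∞)⁻¹ := by
      intro z
      have hpre : MeasurableSet ((fun x : Fin N → Ed d => x (idx z)) ⁻¹' A) :=
        measurable_pi_apply (idx z) hA
      have h1 : ∫⁻ x, (if x (idx z) ∈ A then (1 : ℝ≥0∞) else 0) ∂γN
          = γN ((fun x : Fin N → Ed d => x (idx z)) ⁻¹' A) := by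
        rw [← lintegral_indicator_one hpre]
        exact lintegral_congr fun x => by simp [Set.indicator_apply]
      rw [lintegral_mul_const _ (hmeasind z), h1,
        ← Measure.map_apply (measurable_pi_apply (idx z)) hA, hmarg (idx z)]
    rw [lintegral_congr hm1S, hfs, Finset.sum_congr rfl fun z _ => hterm z,
      Finset.sum_const, Finset.card_univ, ZMod.card, nsmul_eq_mul]
    rw [show (N : ℝ≥0∞) * (μ A * (N : ℝ≥0∞)⁻¹) = (N : ℝ≥0∞) * (N : ℝ≥0∞)⁻¹ * μ A by ring,
      ENNReal.mul_inv_cancel hN0 hNt, one_mul]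
  -- cost of P
  set t : Fin N → Fin N → ℝ≥0∞ := fun k l => ∫⁻ x, cc (x k) (x l) ∂γN with ht
  have hint2 : ∀ k l : Fin N, Measurable fun x : Fin N → Ed d => cc (x k) (x l) := by
    intro k l
    have hp : Measurable fun x : Fin N → Ed d => (x k, x l) :=
      (measurable_pi_apply k).prodMk (measurable_pi_apply l)
    exact hcc.comp hp
  have hpair : Measurable fun u : IdxG N => (u 0, u 1) :=
    (measurable_pi_apply 0).prodMk (measurable_pi_apply 1)
  have hCinfP : Cinf cc P
      = (∑ k : Fin N, ∑ l : Fin N, t k l) * ((N : ℝ≥0∞) * N)⁻¹ := by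
    have h01 : Measurable fun y : ℕ → Ed d => (y 0, y 1) :=
      (measurable_pi_apply 0).prodMk (measurable_pi_apply 1)
    have hint : Measurable fun y : ℕ → Ed d => cc (y 0) (y 1) := hcc.comp h01
    have hjoint : Measurable fun p : (Fin N → Ed d) × IdxG N =>
        cc (p.1 (idx (p.2 0))) (p.1 (idx (p.2 1))) := by
      have hq : Measurable fun p : (Fin N → Ed d) × IdxG N =>
          (p.1 (idx (p.2 0)), p.1 (idx (p.2 1))) :=
        (he.comp (measurable_fst.prodMk ((measurable_pi_apply 0).comp
          measurable_snd))).prodMk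
          (he.comp (measurable_fst.prodMk ((measurable_pi_apply 1).comp measurable_snd)))
      exact hcc.comp hq
    have step1 : Cinf cc P
        = ∫⁻ p, cc (p.1 (idx (p.2 0))) (p.1 (idx (p.2 1))) ∂(γN.prod (nu N)) := by
      rw [Cinf, hPdef, lintegral_map hint hΦ]
    have step2 : ∫⁻ p, cc (p.1 (idx (p.2 0))) (p.1 (idx (p.2 1))) ∂(γN.prod (nu N))
        = ∫⁻ x, ∫⁻ u, cc (x (idx (u 0))) (x (idx (u 1))) ∂(nu N) ∂γN :=
      lintegral_prod _ hjoint.aemeasurable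
    have step3 : ∀ x : Fin N → Ed d,
        ∫⁻ u, cc (x (idx (u 0))) (x (idx (u 1))) ∂(nu N)
          = ∑ w : ZMod N × ZMod N, cc (x (idx w.1)) (x (idx w.2)) * ((N : ℝ≥0∞) * N)⁻¹ := by
      intro x
      have hg : Measurable fun w : ZMod N × ZMod N => cc (x (idx w.1)) (x (idx w.2)) :=
        measurable_of_countable _
      have hmap : ∫⁻ u, cc (x (idx (u 0))) (x (idx (u 1))) ∂(nu N)
          = ∫⁻ w, cc (x (idx w.1)) (x (idx w.2))
              ∂((nu N).map fun u : IdxG N => (u 0, u 1)) :=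
        (lintegral_map hg hpair).symm
      rw [hmap, lintegral_fintype]
      exact Finset.sum_congr rfl fun w _ => by rw [nu_map_pair w]
    have step4 : ∫⁻ x, ∑ w : ZMod N × ZMod N,
          cc (x (idx w.1)) (x (idx w.2)) * ((N : ℝ≥0∞) * N)⁻¹ ∂γN
        = ∑ w : ZMod N × ZMod N, t (idx w.1) (idx w.2) * ((N : ℝ≥0∞) * N)⁻¹ := by
      rw [lintegral_finset_sum _ fun w _ => (hint2 _ _).mul_const _]
      exact Finset.sum_congr rfl fun w _ => lintegral_mul_const _ (hint2 _ _)
    have step5 : (∑ w : ZMod N × ZMod N, t (idx w.1) (idx w.2) * ((N : ℝ≥0∞) * N)⁻¹)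
        = ∑ v : Fin N × Fin N, t v.1 v.2 * ((N : ℝ≥0∞) * N)⁻¹ :=
      Fintype.sum_bijective (Prod.map idx idx) (idx_bijective.prodMap idx_bijective)
        _ _ (fun w => rfl)
    rw [step1, step2, lintegral_congr step3, step4, step5, ← Finset.sum_mul,
      Fintype.sum_prod_type]
  have htkk : ∀ k : Fin N, t k k ≤ Me := by
    intro k
    calc t k k ≤ ∫⁻ _, Me ∂γN := lintegral_mono fun x => hbdd _ _
      _ = Me := by simp [lintegral_const]
  have htsym : ∀ k l : Fin N, t k l = t l k := fun k l =>
    lintegral_congr fun x => hsymc _ _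
  set CC := ∫⁻ x, pairCost cc x ∂γN with hCC
  have hCCeq : CC = ∑ k : Fin N, ∑ l : Fin N, if k < l then t k l else 0 :=
    lintegral_pairCost cc hcc γN
  have hsplit : (∑ k : Fin N, ∑ l : Fin N, t k l)
      = (∑ k : Fin N, ∑ l : Fin N, if k = l then t k l else 0)
        + (∑ k : Fin N, ∑ l : Fin N, if k < l then t k l else 0)
        + (∑ k : Fin N, ∑ l : Fin N, if l < k then t k l else 0) := by
    have h1 : (∑ k : Fin N, ∑ l : Fin N, t k l)
        = ∑ k : Fin N, ∑ l : Fin N, ((if k = l then t k l else 0)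
          + (if k < l then t k l else 0) + (if l < k then t k l else 0)) :=
      Finset.sum_congr rfl fun k _ => Finset.sum_congr rfl fun l _ => tri_split k l (t k l)
    rw [h1]
    simp [Finset.sum_add_distrib]
  have hdiag : (∑ k : Fin N, ∑ l : Fin N, if k = l then t k l else 0)
      = ∑ k : Fin N, t k k := by
    refine Finset.sum_congr rfl fun k _ => ?_
    simp
  have hoff : (∑ k : Fin N, ∑ l : Fin N, if l < k then t k l else 0)
      = ∑ k : Fin N, ∑ l : Fin N, if k < l then t k l else 0 := by
    rw [Finset.sum_comm]
    refine Finset.sum_congr rfl fun a _ => Finset.sum_congr rfl fun b _ => ?_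
    by_cases h : a < b
    · rw [if_pos h, if_pos h, htsym]
    · rw [if_neg h, if_neg h]
  have hbound : (∑ k : Fin N, ∑ l : Fin N, t k l) ≤ (N : ℝ≥0∞) * Me + 2 * CC := by
    rw [hsplit, hdiag, hoff, ← hCCeq]
    have hD : (∑ _k : Fin N, Me) = (N : ℝ≥0∞) * Me := by
      rw [Finset.sum_const, Finset.card_univ, Fintype.card_fin, nsmul_eq_mul]
    calc (∑ k : Fin N, t k k) + CC + CC
        ≤ (∑ _k : Fin N, Me) + CC + CC :=
          add_le_add_left (add_le_add_left (Finset.sum_le_sum fun k _ => htkk k) _) _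
      _ = (N : ℝ≥0∞) * Me + 2 * CC := by rw [hD]; ring
  have halg : ((N : ℝ≥0∞) * Me + 2 * CC) * ((N : ℝ≥0∞) * N)⁻¹
      = Me * (N : ℝ≥0∞)⁻¹ + (2 * ((N : ℝ≥0∞) * N)⁻¹) * CC := by
    rw [add_mul]
    congr 1
    · rw [ENNReal.mul_inv (Or.inl hN0) (Or.inl hNt),
        show (N : ℝ≥0∞) * Me * ((N : ℝ≥0∞)⁻¹ * (N : ℝ≥0∞)⁻¹)
          = ((N : ℝ≥0∞) * (N : ℝ≥0∞)⁻¹) * (Me * (N : ℝ≥0∞)⁻¹) by ring,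
        ENNReal.mul_inv_cancel hN0 hNt, one_mul]
    · ring
  have hF : FinfOT cc μ ≤ Cinf cc P := by
    rw [FinfOT]
    exact iInf_le_of_le P (iInf_le_of_le inferInstance
      (iInf_le_of_le hPexch (iInf_le_of_le hPmarg le_rfl)))
  calc FinfOT cc μ ≤ Cinf cc P := hF
    _ = (∑ k : Fin N, ∑ l : Fin N, t k l) * ((N : ℝ≥0∞) * N)⁻¹ := hCinfP
    _ ≤ ((N : ℝ≥0∞) * Me + 2 * CC) * ((N : ℝ≥0∞) * N)⁻¹ := mul_le_mul_left hbound _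
    _ = Me * (N : ℝ≥0∞)⁻¹ + (2 * ((N : ℝ≥0∞) * N)⁻¹) * CC := halg
    _ ≤ Me * (N : ℝ≥0∞)⁻¹ + ((N.choose 2 : ℕ) : ℝ≥0∞)⁻¹ * CC :=
        add_le_add_right (mul_le_mul_left (inv_sq_le_inv_choose N hN) CC) _
    _ = ((N.choose 2 : ℕ) : ℝ≥0∞)⁻¹ * CC + Me * (N : ℝ≥0∞)⁻¹ := add_comm _ _


end NBodyAux

open NBodyAux in
/-- Theorem 1.2, bounded case: for a bounded symmetric Borel cost `c` with
`c ≤ M`, one has `F_∞^OT[μ] - M/N ≤ F_N^OT[μ] ≤ F_∞^OT[μ]`; in particular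
`F_N^OT[μ] → F_∞^OT[μ]` as `N → ∞`. -/
theorem N_body_cost_approaches_infinite_body_cost_bounded
    {d : ℕ} (c : Ed d → Ed d → ℝ)
    (hmeas : Measurable fun p : Ed d × Ed d => c p.1 p.2)
    (hsymm : ∀ x y, c x y = c y x) (hnonneg : ∀ x y, 0 ≤ c x y)
    (M : ℝ) (hbdd : ∀ x y, c x y ≤ M)
    (μ : Measure (Ed d)) [IsProbabilityMeasure μ] :
    (∀ N : ℕ, 2 ≤ N →
      FinfOT (fun x y => ENNReal.ofReal (c x y)) μ - ENNReal.ofReal M / (N : ℝ≥0∞)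
          ≤ FNOT N (fun x y => ENNReal.ofReal (c x y)) μ ∧
      FNOT N (fun x y => ENNReal.ofReal (c x y)) μ
          ≤ FinfOT (fun x y => ENNReal.ofReal (c x y)) μ) ∧
    Tendsto (fun N : ℕ => FNOT N (fun x y => ENNReal.ofReal (c x y)) μ) atTop
      (𝓝 (FinfOT (fun x y => ENNReal.ofReal (c x y)) μ)) := by
  set cc : Ed d → Ed d → ℝ≥0∞ := fun x y => ENNReal.ofReal (c x y) with hccdef
  have hccm : Measurable fun q : Ed d × Ed d => cc q.1 q.2 := hmeas.ennreal_ofReal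
  have hsymc : ∀ x y, cc x y = cc y x := fun x y => by
    simp only [hccdef, hsymm x y]
  have hbddE : ∀ x y, cc x y ≤ ENNReal.ofReal M := fun x y =>
    ENNReal.ofReal_le_ofReal (hbdd x y)
  have key : ∀ N : ℕ, 2 ≤ N →
      FinfOT cc μ - ENNReal.ofReal M / (N : ℝ≥0∞) ≤ FNOT N cc μ ∧
      FNOT N cc μ ≤ FinfOT cc μ := by
    intro N hN
    have hk0 := choose_cast_ne_zero N hN
    have hkt : ((N.choose 2 : ℕ) : ℝ≥0∞) ≠ ⊤ := natCast_ne_top _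
    constructor
    · -- lower bound
      have hstep : ∀ γN : Measure (Fin N → Ed d), IsProbabilityMeasure γN →
          IsSymmetricN γN → (∀ i : Fin N, γN.map (fun x => x i) = μ) →
          FinfOT cc μ - ENNReal.ofReal M / (N : ℝ≥0∞)
            ≤ ((N.choose 2 : ℕ) : ℝ≥0∞)⁻¹ * (∫⁻ x, pairCost cc x ∂γN) := by
        intro γN h1 _h2 h3
        haveI := h1
        have h4 := FinfOT_le_bound hN cc hccm hsymc (ENNReal.ofReal M) hbddE μ γN h3
        rw [tsub_le_iff_right, div_eq_mul_inv]
        exact h4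
      have h2 : ((N.choose 2 : ℕ) : ℝ≥0∞) *
          (FinfOT cc μ - ENNReal.ofReal M / (N : ℝ≥0∞))
          ≤ ⨅ (γ : Measure (Fin N → Ed d)) (_ : IsProbabilityMeasure γ)
              (_ : IsSymmetricN γ) (_ : ∀ i : Fin N, γ.map (fun x => x i) = μ),
              ∫⁻ x, pairCost cc x ∂γ := by
        refine le_iInf fun γN => le_iInf fun h1 => le_iInf fun hs => le_iInf fun h3 => ?_
        have h4 := hstep γN h1 hs h3
        calc ((N.choose 2 : ℕ) : ℝ≥0∞) *
              (FinfOT cc μ - ENNReal.ofReal M / (N : ℝ≥0∞))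
            ≤ ((N.choose 2 : ℕ) : ℝ≥0∞) *
              (((N.choose 2 : ℕ) : ℝ≥0∞)⁻¹ * (∫⁻ x, pairCost cc x ∂γN)) :=
              mul_le_mul_right h4 _
          _ = ∫⁻ x, pairCost cc x ∂γN := by
              rw [← mul_assoc, ENNReal.mul_inv_cancel hk0 hkt, one_mul]
      calc FinfOT cc μ - ENNReal.ofReal M / (N : ℝ≥0∞)
          = ((N.choose 2 : ℕ) : ℝ≥0∞)⁻¹ * (((N.choose 2 : ℕ) : ℝ≥0∞) *
            (FinfOT cc μ - ENNReal.ofReal M / (N : ℝ≥0∞))) := by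
            rw [← mul_assoc, ENNReal.inv_mul_cancel hk0 hkt, one_mul]
        _ ≤ FNOT N cc μ := by
            rw [FNOT]
            exact mul_le_mul_right h2 _
    · -- upper bound
      rw [FinfOT]
      refine le_iInf fun γ => le_iInf fun h1 => le_iInf fun h2 => le_iInf fun h3 => ?_
      haveI := h1
      exact FNOT_le_Cinf hN cc hccm μ γ h2 h3
  refine ⟨key, ?_⟩
  have hlow : ∀ᶠ N : ℕ in atTop,
      FinfOT cc μ - ENNReal.ofReal M / (N : ℝ≥0∞) ≤ FNOT N cc μ := by
    filter_upwards [eventually_ge_atTop 2] with N hN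
    exact (key N hN).1
  have hup : ∀ᶠ N : ℕ in atTop, FNOT N cc μ ≤ FinfOT cc μ := by
    filter_upwards [eventually_ge_atTop 2] with N hN
    exact (key N hN).2
  have hdiv : Tendsto (fun N : ℕ => ENNReal.ofReal M / (N : ℝ≥0∞)) atTop (𝓝 0) := by
    have h1 : Tendsto (fun N : ℕ => ((N : ℝ≥0∞))⁻¹) atTop (𝓝 0) :=
      ENNReal.tendsto_inv_nat_nhds_zero
    have h2 := ENNReal.Tendsto.const_mul (a := ENNReal.ofReal M) h1
      (Or.inr (ENNReal.ofReal_ne_top (r := M)))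
    simpa [div_eq_mul_inv] using h2
  have hlowt : Tendsto (fun N : ℕ => FinfOT cc μ - ENNReal.ofReal M / (N : ℝ≥0∞))
      atTop (𝓝 (FinfOT cc μ)) := by
    have h3 := ENNReal.Tendsto.sub (tendsto_const_nhds (x := FinfOT cc μ)) hdiv
      (Or.inr (by simp))
    simpa using h3
  exact tendsto_of_tendsto_of_tendsto_of_le_of_le' hlowt tendsto_const_nhds hlow hup
end
end

section
/- Let d ≥ 1 and let ℓ : ℝ^d → [0,∞) be even, with ℓ ∈ C_b(ℝ^d) ∩ L¹(ℝ^d) and ℓ̂ ≥ 0. Let Q be a Borel probability measure on ℝ^d with ∫∫ ℓ(x−y) dQ(x) dQ(y) < ∞. Then ℓ̂ |Q̂|² ∈ L¹(ℝ^d) and ∫∫_{ℝ^d×ℝ^d} ℓ(x−y) dQ(x) dQ(y) = (2π)^{−d} ∫_{ℝ^d} ℓ̂(z) |Q̂(z)|² dz. -/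
open MeasureTheory ENNReal Filter Topology ProbabilityTheory
open Real Complex FourierTransform
open scoped RealInnerProductSpace

noncomputable section

/-- The Fourier transform `f̂(k) = ∫ e^{-i k·x} f(x) dx` of a function on `ℝ^d`. -/
def ftL (d : ℕ) (f : Ed d → ℝ) (k : Ed d) : ℂ :=
  ∫ x : Ed d, Complex.exp (-(Complex.I * ((inner ℝ x k : ℝ) : ℂ))) * (f x : ℂ)

/-- The Fourier transform `Q̂(k) = ∫ e^{-i k·x} dQ(x)` of a finite Borel measure on `ℝ^d`. -/
def ftM {d : ℕ} (Q : Measure (Ed d)) (k : Ed d) : ℂ :=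
  ∫ x, Complex.exp (-(Complex.I * ((inner ℝ x k : ℝ) : ℂ))) ∂Q

lemma ftL_eq_fourier {d : ℕ} (ℓ : Ed d → ℝ) (k : Ed d) :
    ftL d ℓ k = 𝓕 (fun x : Ed d => (ℓ x : ℂ)) ((2 * π)⁻¹ • k) := by
  rw [Real.fourier_eq']
  unfold ftL
  congr 1
  ext x
  rw [smul_eq_mul]
  congr 1
  rw [real_inner_smul_right]
  have hπ : (2 * π) ≠ 0 := by positivity
  have : -2 * π * ((2 * π)⁻¹ * inner ℝ x k) = -(inner ℝ x k : ℝ) := by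
    field_simp
  rw [this]
  push_cast
  ring

variable {d : ℕ}

lemma integrable_fourier_of_nonneg {ℓ : Ed d → ℝ}
    (hnonneg : ∀ z, 0 ≤ ℓ z) (hcont : Continuous ℓ) (hL1 : Integrable ℓ)
    (hpos : ∀ w : Ed d, ∃ r : ℝ, 0 ≤ r ∧ 𝓕 (fun x : Ed d => (ℓ x : ℂ)) w = (r : ℂ)) :
    Integrable (𝓕 (fun x : Ed d => (ℓ x : ℂ))) := by
  set F : Ed d → ℂ := fun x => (ℓ x : ℂ) with hF
  have hFint : Integrable F := hL1.ofReal
  have hFcont : Continuous F := Complex.continuous_ofReal.comp hcont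
  have h𝓕cont : Continuous (𝓕 F) :=
    VectorFourier.fourierIntegral_continuous Real.continuous_fourierChar
      (by exact continuous_inner) hFint
  set g : Ed d → ℝ := fun w => (𝓕 F w).re with hg
  have hgeq : ∀ w, 𝓕 F w = ((g w : ℝ) : ℂ) := by
    intro w; obtain ⟨r, hr0, hr⟩ := hpos w
    simp [hg, hr]
  have hg0 : ∀ w, 0 ≤ g w := by
    intro w; obtain ⟨r, hr0, hr⟩ := hpos w
    simp [hg, hr]; exact hr0
  have hgcont : Continuous g := Complex.continuous_re.comp h𝓕cont
  -- identity for each c > 0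
  have hE1 : ∀ c : ℝ, 0 < c →
      ∫ w : Ed d, Complex.exp (-(c⁻¹ : ℝ) * ‖w‖ ^ 2) * 𝓕 F w =
        ∫ w : Ed d, (((π : ℂ) * c) ^ (Module.finrank ℝ (Ed d) / 2 : ℂ) *
            Complex.exp ((-(π:ℂ) ^ 2) * c * ‖(0 : Ed d) - w‖ ^ 2)) • F w := by
    intro c hc
    set gau : Ed d → ℂ := fun w ↦
        Complex.exp (-((c⁻¹ : ℝ) : ℂ) * ‖w‖ ^ 2 + 2 * π * Complex.I * ⟪(0 : Ed d), w⟫) with hgau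
    have hbre : (0:ℝ) < (((c⁻¹ : ℝ) : ℂ)).re := by simpa using inv_pos.2 hc
    have J : Integrable gau :=
      GaussianFourier.integrable_cexp_neg_mul_sq_norm_add hbre _ _
    have key := (VectorFourier.integral_fourierIntegral_smul_eq_flip (L := innerₗ (Ed d))
      Real.continuous_fourierChar continuous_inner J hFint)
    rw [flip_innerₗ] at key
    have key' : (∫ ξ : Ed d, (𝓕 gau ξ) • F ξ) = ∫ x : Ed d, gau x • (𝓕 F x) := key
    have lhs_eq : ∫ w : Ed d, Complex.exp (-(c⁻¹ : ℝ) * ‖w‖ ^ 2) * 𝓕 F w =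
        ∫ x : Ed d, gau x • (𝓕 F x) := by
      congr 1; ext w; simp [hgau, smul_eq_mul]
    rw [lhs_eq, ← key']
    congr 1
    ext w
    rw [hgau]
    rw [fourier_gaussian_innerProductSpace' hbre]
    congr 2
    · rw [div_eq_mul_inv, Complex.ofReal_inv, inv_inv]
    · congr 1
      rw [div_eq_mul_inv, Complex.ofReal_inv, inv_inv]
      ring
  -- convergence of Gaussian-regularized integrals
  have htend : Tendsto (fun c : ℝ => ∫ w : Ed d, Complex.exp (-(c⁻¹ : ℝ) * ‖w‖ ^ 2) * 𝓕 F w)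
      atTop (𝓝 (F 0)) := by
    have h0 := Real.tendsto_integral_gaussian_smul' hFint (hFcont.continuousAt (x := 0))
    apply h0.congr'
    filter_upwards [Ioi_mem_atTop (0:ℝ)] with c (hc : 0 < c)
    exact (hE1 c hc).symm
  set Jr : ℝ → ℝ := fun c => ∫ w : Ed d, Real.exp (-c⁻¹ * ‖w‖ ^ 2) * g w with hJr
  have hJreq : ∀ c : ℝ, ((Jr c : ℝ) : ℂ) =
      ∫ w : Ed d, Complex.exp (-(c⁻¹ : ℝ) * ‖w‖ ^ 2) * 𝓕 F w := by
    intro c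
    show ((∫ w : Ed d, Real.exp (-c⁻¹ * ‖w‖ ^ 2) * g w : ℝ) : ℂ) = _
    have heq : ∫ w : Ed d, Complex.exp (-(c⁻¹ : ℝ) * ‖w‖ ^ 2) * 𝓕 F w =
        ∫ w : Ed d, ((Real.exp (-c⁻¹ * ‖w‖ ^ 2) * g w : ℝ) : ℂ) := by
      congr 1; ext w
      rw [hgeq w, Complex.ofReal_mul, Complex.ofReal_exp]
      push_cast
      ring
    rw [heq]
    exact (integral_ofReal (𝕜 := ℂ)).symm
  have hJtend : Tendsto Jr atTop (𝓝 (ℓ 0)) := by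
    have : Tendsto (fun c => ((Jr c : ℝ) : ℂ)) atTop (𝓝 (F 0)) := by
      simp_rw [hJreq]; exact htend
    have := (Complex.continuous_re.tendsto _).comp this
    simpa [Function.comp_def, hF] using this
  -- boundedness of g
  obtain ⟨C, hC⟩ : ∃ C : ℝ, ∀ w, |g w| ≤ C := by
    refine ⟨∫ x : Ed d, ‖F x‖, fun w => ?_⟩
    refine (Complex.abs_re_le_norm _).trans ?_
    exact VectorFourier.norm_fourierIntegral_le_integral_norm _ _ _ _ _
  -- integrability of the regularized integrand
  have hint : ∀ c : ℝ, 0 < c →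
      Integrable (fun w : Ed d => Real.exp (-c⁻¹ * ‖w‖ ^ 2) * g w) := by
    intro c hc
    have hbre : (0:ℝ) < (((c⁻¹ : ℝ) : ℂ)).re := by simpa using inv_pos.2 hc
    have J : Integrable (fun w : Ed d =>
        Complex.exp (-((c⁻¹ : ℝ) : ℂ) * ‖w‖ ^ 2 + 2 * π * Complex.I * ⟪(0 : Ed d), w⟫)) :=
      GaussianFourier.integrable_cexp_neg_mul_sq_norm_add hbre _ _
    have hgauss : Integrable (fun w : Ed d => Real.exp (-c⁻¹ * ‖w‖ ^ 2)) := by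
      have := J.norm
      simpa [Complex.norm_exp, ← Complex.ofReal_pow] using this
    have := hgauss.bdd_mul hgcont.aestronglyMeasurable
      (ae_of_all _ fun w => by simpa [Real.norm_eq_abs] using hC w)
    apply this.congr
    filter_upwards with w
    ring
  -- monotone convergence
  have hmct : Tendsto (fun n : ℕ => ∫⁻ w : Ed d,
      ENNReal.ofReal (Real.exp (-((n:ℝ)+1)⁻¹ * ‖w‖ ^ 2) * g w))
      atTop (𝓝 (∫⁻ w : Ed d, ENNReal.ofReal (g w))) := by
    apply lintegral_tendsto_of_tendsto_of_monotone
    · intro n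
      exact (ENNReal.continuous_ofReal.comp
        ((Real.continuous_exp.comp
          ((continuous_const.mul ((continuous_norm.pow 2) : Continuous fun w : Ed d => ‖w‖ ^ 2)))).mul
          hgcont)).measurable.aemeasurable
    · filter_upwards with w
      intro n m hnm
      apply ENNReal.ofReal_le_ofReal
      apply mul_le_mul_of_nonneg_right _ (hg0 w)
      apply Real.exp_le_exp.2
      rw [neg_mul, neg_mul, neg_le_neg_iff]
      apply mul_le_mul_of_nonneg_right _ (sq_nonneg _)
      apply inv_anti₀ (by positivity)
      have : (n:ℝ) ≤ m := by exact_mod_cast hnm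
      linarith
    · filter_upwards with w
      have h1 : Tendsto (fun n : ℕ => -((n:ℝ)+1)⁻¹ * ‖w‖ ^ 2) atTop (𝓝 0) := by
        have : Tendsto (fun n : ℕ => ((n:ℝ)+1)⁻¹) atTop (𝓝 0) :=
          tendsto_one_div_add_atTop_nhds_zero_nat.congr (by intro n; rw [one_div])
        simpa using (this.neg.mul_const (‖w‖^2))
      have h2 : Tendsto (fun n : ℕ => Real.exp (-((n:ℝ)+1)⁻¹ * ‖w‖ ^ 2) * g w)
          atTop (𝓝 (g w)) := by
        have := (Real.continuous_exp.tendsto 0).comp h1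
        simpa using this.mul_const (g w)
      exact (ENNReal.continuous_ofReal.tendsto _).comp h2
  have heval : ∀ n : ℕ, ∫⁻ w : Ed d,
      ENNReal.ofReal (Real.exp (-((n:ℝ)+1)⁻¹ * ‖w‖ ^ 2) * g w) = ENNReal.ofReal (Jr ((n:ℝ)+1)) := by
    intro n
    rw [← ofReal_integral_eq_lintegral_ofReal (hint _ (by positivity))]
    filter_upwards with w
    exact mul_nonneg (Real.exp_nonneg _) (hg0 w)
  have hmct2 : Tendsto (fun n : ℕ => ENNReal.ofReal (Jr ((n:ℝ)+1))) atTop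
      (𝓝 (ENNReal.ofReal (ℓ 0))) := by
    apply (ENNReal.continuous_ofReal.tendsto _).comp
    apply hJtend.comp
    exact tendsto_atTop_add_const_right atTop 1 tendsto_natCast_atTop_atTop
  have hfin : ∫⁻ w : Ed d, ENNReal.ofReal (g w) = ENNReal.ofReal (ℓ 0) := by
    apply tendsto_nhds_unique _ hmct2
    apply hmct.congr
    intro n
    exact heval n
  refine ⟨h𝓕cont.aestronglyMeasurable, ?_⟩
  rw [HasFiniteIntegral]
  have : ∀ w : Ed d, (‖𝓕 F w‖₊ : ℝ≥0∞) = ENNReal.ofReal (g w) := by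
    intro w
    rw [← enorm_eq_nnnorm, ← ofReal_norm, hgeq w]
    congr 1
    simpa using _root_.abs_of_nonneg (hg0 w)
  calc ∫⁻ w, (‖𝓕 F w‖₊ : ℝ≥0∞) = ∫⁻ w, ENNReal.ofReal (g w) := by
        exact lintegral_congr this
    _ = ENNReal.ofReal (ℓ 0) := hfin
    _ < ⊤ := ENNReal.ofReal_lt_top

/-- Lemma 2.11, quadratic form (regular case): for even nonnegative
`ℓ ∈ C_b ∩ L¹` with `ℓ̂ ≥ 0` and a probability measure `Q` with
`∫∫ ℓ(x-y) dQ dQ < ∞`, one has `ℓ̂ |Q̂|² ∈ L¹` and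
`∫∫ ℓ(x-y) dQ(x) dQ(y) = (2π)^{-d} ∫ ℓ̂(z) |Q̂(z)|² dz`. -/
theorem fourier_identity_quadratic
    {d : ℕ} (hd : 1 ≤ d) (ℓ : Ed d → ℝ)
    (hnonneg : ∀ z, 0 ≤ ℓ z) (heven : ∀ z, ℓ (-z) = ℓ z)
    (hcont : Continuous ℓ) (hL1 : Integrable ℓ) (hbdd : ∃ M : ℝ, ∀ z, ℓ z ≤ M)
    (hft : ∀ k : Ed d, ∃ r : ℝ, 0 ≤ r ∧ ftL d ℓ k = (r : ℂ))
    (Q : Measure (Ed d)) [IsProbabilityMeasure Q]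
    (hfin : ∫⁻ x, ∫⁻ y, ENNReal.ofReal (ℓ (x - y)) ∂Q ∂Q < ⊤) :
    Integrable (fun z : Ed d => ftL d ℓ z * (‖ftM Q z‖ : ℂ) ^ 2) ∧
    (((∫⁻ x, ∫⁻ y, ENNReal.ofReal (ℓ (x - y)) ∂Q ∂Q).toReal : ℂ)
      = ((2 * Real.pi : ℂ) ^ d)⁻¹ *
          ∫ z : Ed d, ftL d ℓ z * (‖ftM Q z‖ : ℂ) ^ 2) := by
  have hπ : (0:ℝ) < 2 * π := by positivity
  set F : Ed d → ℂ := fun x => (ℓ x : ℂ) with hF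
  have hFint : Integrable F := hL1.ofReal
  have hFcont : Continuous F := Complex.continuous_ofReal.comp hcont
  have h𝓕cont : Continuous (𝓕 F) :=
    VectorFourier.fourierIntegral_continuous Real.continuous_fourierChar
      (by exact continuous_inner) hFint
  -- 𝓕 F in terms of ftL and vice versa
  have hftL : ∀ k, ftL d ℓ k = 𝓕 F ((2 * π)⁻¹ • k) := ftL_eq_fourier ℓ
  have h𝓕F : ∀ w, 𝓕 F w = ftL d ℓ ((2 * π) • w) := by
    intro w
    rw [hftL ((2 * π) • w), smul_smul, inv_mul_cancel₀ hπ.ne', one_smul]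
  have h𝓕int : Integrable (𝓕 F) := by
    apply integrable_fourier_of_nonneg hnonneg hcont hL1
    intro w
    obtain ⟨r, hr0, hr⟩ := hft ((2 * π) • w)
    exact ⟨r, hr0, by rw [h𝓕F w]; exact hr⟩
  -- inversion
  have hinv : ∀ v : Ed d, F v = ∫ w : Ed d, (𝐞 ⟪w, v⟫ : Circle) • 𝓕 F w := by
    intro v
    conv_lhs => rw [← hFcont.fourierInv_fourier_eq hFint h𝓕int]
    rw [Real.fourierInv_eq]
  -- ftM basic facts
  have hftM_cont : Continuous (ftM Q) := by
    have h1 : Continuous (VectorFourier.fourierIntegral 𝐞 Q (innerₗ (Ed d)) (fun _ => (1:ℂ))) :=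
      VectorFourier.fourierIntegral_continuous Real.continuous_fourierChar
        (by exact continuous_inner) (integrable_const 1)
    have h2 : ftM Q = fun k =>
        VectorFourier.fourierIntegral 𝐞 Q (innerₗ (Ed d)) (fun _ => (1:ℂ)) ((2 * π)⁻¹ • k) := by
      funext k
      rw [VectorFourier.fourierIntegral]
      unfold ftM
      congr 1; ext x
      rw [Circle.smul_def, Real.fourierChar_apply, smul_eq_mul, mul_one, innerₗ_apply_apply,
        real_inner_smul_right]
      have h3 : 2 * π * -((2 * π)⁻¹ * inner ℝ x k) = -(inner ℝ x k : ℝ) := by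
        field_simp
      rw [h3]
      push_cast
      ring_nf
    rw [h2]
    exact h1.comp (continuous_const_smul _)
  have hftM_bd : ∀ k, ‖ftM Q k‖ ≤ 1 := by
    intro k
    unfold ftM
    calc ‖∫ x, Complex.exp (-(Complex.I * ((inner ℝ x k : ℝ) : ℂ))) ∂Q‖
        ≤ 1 * (Q Set.univ).toReal := by
          apply norm_integral_le_of_norm_le_const
          filter_upwards with x
          simp [Complex.norm_exp]
      _ = 1 := by simp
  -- product measure setup
  set P : Measure (Ed d × Ed d) := Q.prod Q with hP
  have hsubcont : Continuous (fun p : Ed d × Ed d => ℓ (p.1 - p.2)) :=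
    hcont.comp (continuous_fst.sub continuous_snd)
  obtain ⟨M, hM⟩ := hbdd
  have hPint : Integrable (fun p : Ed d × Ed d => ℓ (p.1 - p.2)) P := by
    apply Integrable.mono' (integrable_const M) hsubcont.aestronglyMeasurable
    filter_upwards with p
    rw [Real.norm_eq_abs, _root_.abs_of_nonneg (hnonneg _)]
    exact hM _
  have step1 : ∫⁻ x, ∫⁻ y, ENNReal.ofReal (ℓ (x - y)) ∂Q ∂Q
      = ∫⁻ p, ENNReal.ofReal (ℓ (p.1 - p.2)) ∂P := by
    rw [lintegral_prod]
    exact (ENNReal.continuous_ofReal.comp hsubcont).measurable.aemeasurable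
  have step2 : (∫⁻ p, ENNReal.ofReal (ℓ (p.1 - p.2)) ∂P).toReal
      = ∫ p, ℓ (p.1 - p.2) ∂P :=
    (integral_eq_lintegral_of_nonneg_ae (by filter_upwards with p using hnonneg _)
      hsubcont.aestronglyMeasurable).symm
  -- Fubini
  set K : (Ed d × Ed d) → Ed d → ℂ := fun p w => (𝐞 ⟪w, p.1 - p.2⟫ : Circle) • 𝓕 F w with hK
  have hKcont : Continuous (Function.uncurry K) := by
    apply Continuous.smul
    · exact continuous_subtype_val.comp (Real.continuous_fourierChar.comp (continuous_inner.comp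
        (continuous_snd.prodMk ((continuous_fst.fst).sub continuous_fst.snd))))
    · exact h𝓕cont.comp continuous_snd
  have hKint : Integrable (Function.uncurry K) (P.prod volume) := by
    have hbound : Integrable (fun q : (Ed d × Ed d) × Ed d => (1:ℝ) * ‖𝓕 F q.2‖)
        (P.prod volume) := (integrable_const (1:ℝ)).mul_prod h𝓕int.norm
    apply hbound.mono' hKcont.aestronglyMeasurable
    filter_upwards with q
    simp [Function.uncurry, hK, norm_smul]
  have step6 : ∀ w : Ed d, (∫ p, K p w ∂P)
      = ((‖ftM Q ((2 * π) • w)‖ : ℝ) : ℂ) ^ 2 * 𝓕 F w := by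
    intro w
    have e1 : ∫ p, K p w ∂P = (∫ p, ((𝐞 ⟪w, p.1 - p.2⟫ : Circle) : ℂ) ∂P) * 𝓕 F w := by
      simp_rw [hK, Circle.smul_def]
      exact integral_mul_const _ _
    have e2 : ∀ p : Ed d × Ed d, ((𝐞 ⟪w, p.1 - p.2⟫ : Circle) : ℂ) =
        ((𝐞 ⟪w, p.1⟫ : Circle) : ℂ) * ((𝐞 (-⟪w, p.2⟫) : Circle) : ℂ) := by
      intro p
      rw [inner_sub_right, sub_eq_add_neg, AddChar.map_add_eq_mul]
      simp
    have e3 : ∫ p, ((𝐞 ⟪w, p.1⟫ : Circle) : ℂ) * ((𝐞 (-⟪w, p.2⟫) : Circle) : ℂ) ∂P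
        = (∫ x, ((𝐞 ⟪w, x⟫ : Circle) : ℂ) ∂Q) * (∫ y, ((𝐞 (-⟪w, y⟫) : Circle) : ℂ) ∂Q) :=
      by rw [hP]
         exact integral_prod_mul (L := ℂ) (fun x => ((𝐞 ⟪w, x⟫ : Circle) : ℂ))
           (fun y => ((𝐞 (-⟪w, y⟫) : Circle) : ℂ))
    have e4 : ∫ y, ((𝐞 (-⟪w, y⟫) : Circle) : ℂ) ∂Q = ftM Q ((2 * π) • w) := by
      unfold ftM
      congr 1; ext y
      rw [Real.fourierChar_apply, real_inner_smul_right, real_inner_comm y w]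
      congr 1
      push_cast
      ring
    have e5 : ∫ x, ((𝐞 ⟪w, x⟫ : Circle) : ℂ) ∂Q = (starRingEnd ℂ) (ftM Q ((2 * π) • w)) := by
      unfold ftM
      rw [← integral_conj]
      congr 1; ext x
      rw [Real.fourierChar_apply, ← Complex.exp_conj]
      congr 1
      rw [map_neg, map_mul, Complex.conj_I, Complex.conj_ofReal, real_inner_smul_right,
        real_inner_comm x w]
      push_cast
      ring
    have e6 : (starRingEnd ℂ) (ftM Q ((2 * π) • w)) * ftM Q ((2 * π) • w)
        = ((‖ftM Q ((2 * π) • w)‖ : ℝ) : ℂ) ^ 2 := by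
      rw [mul_comm, Complex.mul_conj, Complex.normSq_eq_norm_sq]
      push_cast
      ring
    calc ∫ p, K p w ∂P = (∫ p, ((𝐞 ⟪w, p.1 - p.2⟫ : Circle) : ℂ) ∂P) * 𝓕 F w := e1
      _ = ((∫ x, ((𝐞 ⟪w, x⟫ : Circle) : ℂ) ∂Q) * (∫ y, ((𝐞 (-⟪w, y⟫) : Circle) : ℂ) ∂Q))
            * 𝓕 F w := by rw [← e3]; congr 1; exact integral_congr_ae (by filter_upwards with p using e2 p)
      _ = ((‖ftM Q ((2 * π) • w)‖ : ℝ) : ℂ) ^ 2 * 𝓕 F w := by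
            rw [e4, e5, e6]
  -- the integrand on the right-hand side
  set G : Ed d → ℂ := fun z => ftL d ℓ z * ((‖ftM Q z‖ : ℝ) : ℂ) ^ 2 with hG
  have hGeq : ∀ w : Ed d, ((‖ftM Q ((2 * π) • w)‖ : ℝ) : ℂ) ^ 2 * 𝓕 F w
      = G ((2 * π) • w) := by
    intro w
    rw [hG]
    simp only []
    rw [h𝓕F w]
    ring
  have hG_cont : Continuous G := by
    apply Continuous.mul
    · have : ftL d ℓ = fun k => 𝓕 F ((2 * π)⁻¹ • k) := funext hftL
      rw [this]
      exact h𝓕cont.comp (continuous_const_smul _)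
    · exact (Complex.continuous_ofReal.comp (continuous_norm.comp hftM_cont)).pow 2
  have hftL_int : Integrable (fun z : Ed d => 𝓕 F ((2 * π)⁻¹ • z)) :=
    h𝓕int.comp_smul (inv_ne_zero hπ.ne')
  have hG_int : Integrable G := by
    apply Integrable.mono' hftL_int.norm hG_cont.aestronglyMeasurable
    filter_upwards with z
    rw [hG]
    simp only [norm_norm, norm_mul]
    rw [← hftL z]
    calc ‖ftL d ℓ z‖ * ‖((‖ftM Q z‖ : ℝ) : ℂ) ^ 2‖ ≤ ‖ftL d ℓ z‖ * 1 := by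
          apply mul_le_mul_of_nonneg_left _ (norm_nonneg _)
          rw [norm_pow, Complex.norm_real, Real.norm_eq_abs,
            _root_.abs_of_nonneg (norm_nonneg _)]
          exact pow_le_one₀ (norm_nonneg _) (hftM_bd z)
      _ = ‖ftL d ℓ z‖ := mul_one _
  have hrank : Module.finrank ℝ (Ed d) = d := finrank_euclideanSpace_fin
  have hscale := MeasureTheory.Measure.integral_comp_smul (volume : Measure (Ed d)) G (2 * π)
  rw [hrank] at hscale
  refine ⟨hG_int, ?_⟩
  calc (((∫⁻ x, ∫⁻ y, ENNReal.ofReal (ℓ (x - y)) ∂Q ∂Q).toReal : ℝ) : ℂ)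
      = ((∫ p, ℓ (p.1 - p.2) ∂P : ℝ) : ℂ) := by rw [step1, step2]
    _ = ∫ p, F (p.1 - p.2) ∂P := (integral_ofReal (𝕜 := ℂ)).symm
    _ = ∫ p, (∫ w : Ed d, K p w) ∂P :=
        integral_congr_ae (by filter_upwards with p using hinv (p.1 - p.2))
    _ = ∫ w : Ed d, (∫ p, K p w ∂P) := integral_integral_swap hKint
    _ = ∫ w : Ed d, G ((2 * π) • w) := by
        refine integral_congr_ae ?_
        filter_upwards with w
        rw [step6 w, hGeq w]
    _ = ((2 * Real.pi : ℂ) ^ d)⁻¹ * ∫ z : Ed d, G z := by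
        rw [hscale]
        rw [_root_.abs_of_nonneg (by positivity : (0:ℝ) ≤ ((2 * π) ^ d)⁻¹)]
        rw [Complex.real_smul]
        push_cast
        ring
end
end

section
/- Let d ≥ 1 and let ℓ : ℝ^d → [0,∞) be even, with ℓ ∈ C_b(ℝ^d) ∩ L¹(ℝ^d) and ℓ̂ ≥ 0. Let Q and Q̃ be Borel probability measures on ℝ^d with ∫∫ ℓ(x−y) dQ(x) dQ(y) < ∞ and ∫∫ ℓ(x−y) dQ̃(x) dQ̃(y) < ∞. Then ℓ̂ Q̂ conj(Q̃̂) ∈ L¹(ℝ^d) and ∫∫_{ℝ^d×ℝ^d} ℓ(x−y) dQ(x) dQ̃(y) = (2π)^{−d} ∫_{ℝ^d} ℓ̂(z) Q̂(z) conj(Q̃̂(z)) dz. -/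
open MeasureTheory ENNReal Filter Topology ProbabilityTheory

noncomputable section

open scoped FourierTransform RealInnerProductSpace

section Helpers
variable {d : ℕ}


lemma exp_aux (t : ℝ) : Complex.exp (((-2 * Real.pi * ((2 * Real.pi)⁻¹ * t) : ℝ) : ℂ) * Complex.I)
    = Complex.exp (-(Complex.I * (t : ℂ))) := by
  have h : (-2 * Real.pi) * ((2 * Real.pi)⁻¹ * t) = -t := by
    field_simp
  rw [h]; push_cast; ring_nf

lemma ftL_eq {d : ℕ} (ℓ : Ed d → ℝ) (k : Ed d) :
    ftL d ℓ k = 𝓕 (fun x => (ℓ x : ℂ)) ((2 * Real.pi)⁻¹ • k) := by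
  rw [Real.fourier_eq']
  unfold ftL
  congr 1; ext x
  rw [smul_eq_mul, real_inner_smul_right, exp_aux]

lemma fourier_eq_ftL {d : ℕ} (ℓ : Ed d → ℝ) (w : Ed d) :
    𝓕 (fun x => (ℓ x : ℂ)) w = ftL d ℓ ((2 * Real.pi) • w) := by
  rw [ftL_eq, inv_smul_smul₀ (by positivity)]

lemma ftM_eq {d : ℕ} (Q : Measure (Ed d)) (k : Ed d) :
    ftM Q k = VectorFourier.fourierIntegral Real.fourierChar Q (innerₗ (Ed d))
      (fun _ => (1 : ℂ)) ((2 * Real.pi)⁻¹ • k) := by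
  unfold ftM VectorFourier.fourierIntegral
  congr 1; ext x
  rw [Circle.smul_def, Real.fourierChar_apply, smul_eq_mul, mul_one]
  show _ = Complex.exp (((2 * Real.pi * -(innerₗ (Ed d) x ((2*Real.pi)⁻¹ • k)) : ℝ) : ℂ) * Complex.I)
  have : (innerₗ (Ed d) x ((2*Real.pi)⁻¹ • k) : ℝ) = (2*Real.pi)⁻¹ * ⟪x, k⟫ := by
    simp [real_inner_smul_right]
  rw [this]
  rw [show (2 * Real.pi * -((2*Real.pi)⁻¹ * ⟪x,k⟫)) = -2*Real.pi * ((2*Real.pi)⁻¹ * ⟪x,k⟫) by ring]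
  rw [exp_aux]



lemma ftM_continuous (Q : Measure (Ed d)) [IsFiniteMeasure Q] : Continuous (ftM Q) := by
  have h1 : Continuous (VectorFourier.fourierIntegral Real.fourierChar Q (innerₗ (Ed d))
      (fun _ => (1 : ℂ))) :=
    VectorFourier.fourierIntegral_continuous Real.continuous_fourierChar continuous_inner
      (integrable_const _)
  have : Continuous fun k : Ed d => (2 * Real.pi)⁻¹ • k := continuous_const_smul _
  simpa [funext (ftM_eq Q), Function.comp_def] using h1.comp this

lemma ftM_norm_le (Q : Measure (Ed d)) [IsProbabilityMeasure Q] (k : Ed d) :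
    ‖ftM Q k‖ ≤ 1 := by
  unfold ftM
  calc ‖∫ x, Complex.exp (-(Complex.I * ((inner ℝ x k : ℝ) : ℂ))) ∂Q‖
      ≤ 1 * (Q Set.univ).toReal := by
        apply norm_integral_le_of_norm_le_const
        filter_upwards with x
        rw [Complex.norm_exp]
        simp
    _ = 1 := by simp

lemma fourier_cont {ℓ : Ed d → ℝ} (hL1 : Integrable ℓ) :
    Continuous (𝓕 (fun x => (ℓ x : ℂ))) :=
  VectorFourier.fourierIntegral_continuous Real.continuous_fourierChar continuous_inner
    hL1.ofReal

open Complex in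
lemma fourier_integrable {d : ℕ} {ℓ : Ed d → ℝ}
    (hcont : Continuous ℓ) (hL1 : Integrable ℓ)
    (hft : ∀ k, ∃ r : ℝ, 0 ≤ r ∧ ftL d ℓ k = (r : ℂ)) :
    Integrable (𝓕 (fun x => (ℓ x : ℂ))) := by
  set f : Ed d → ℂ := fun x => (ℓ x : ℂ) with hfdef
  have hfi : Integrable f := hL1.ofReal
  have hfc : Continuous f := Complex.continuous_ofReal.comp hcont
  set ρ : Ed d → ℝ := fun w => (𝓕 f w).re with hρdef
  have hρ_eq : ∀ w, 𝓕 f w = ((ρ w : ℝ) : ℂ) := by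
    intro w
    obtain ⟨r, hr0, hr⟩ := hft ((2 * Real.pi) • w)
    have h1 : 𝓕 f w = (r : ℂ) := by rw [hfdef, fourier_eq_ftL, hr]
    rw [h1]; simp [hρdef, h1]
  have hρ0 : ∀ w, 0 ≤ ρ w := by
    intro w
    obtain ⟨r, hr0, hr⟩ := hft ((2 * Real.pi) • w)
    have h1 : 𝓕 f w = (r : ℂ) := by rw [hfdef, fourier_eq_ftL, hr]
    have : ρ w = r := by simp [hρdef, h1]
    rw [this]; exact hr0
  have hρc : Continuous ρ := Complex.continuous_re.comp (fourier_cont hL1)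
  -- the bound on ρ
  obtain ⟨B, hB⟩ : ∃ B : ℝ, ∀ w, ρ w ≤ B := by
    refine ⟨∫ x, ‖f x‖, fun w => ?_⟩
    have := VectorFourier.norm_fourierIntegral_le_integral_norm Real.fourierChar volume
      (innerₗ (Ed d)) f w
    have h2 : ‖𝓕 f w‖ = ρ w := by rw [hρ_eq w]; simp [hρ0 w, abs_of_nonneg]
    exact h2.symm.trans_le this
  -- key identity for fixed c > 0
  have key : ∀ᶠ c : ℝ in atTop,
      (∫ w : Ed d, Complex.exp (-(c : ℂ)⁻¹ * (‖w‖ : ℂ)^2 + 2 * Real.pi * Complex.I * (⟪(0 : Ed d), w⟫ : ℂ)) • 𝓕 f w)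
        = ∫ w : Ed d, ((Real.pi * c : ℂ) ^ (Module.finrank ℝ (Ed d) / 2 : ℂ) *
            Complex.exp (-(Real.pi : ℂ) ^ 2 * c * (‖(0 : Ed d) - w‖ : ℂ) ^ 2)) • f w := by
    filter_upwards [Ioi_mem_atTop (0:ℝ)] with c (hc : 0 < c)
    have J : Integrable (fun w : Ed d ↦
        Complex.exp (- (c:ℂ)⁻¹ * (‖w‖:ℂ)^2 + 2 * Real.pi * Complex.I * (⟪(0 : Ed d), w⟫ : ℂ))) :=
      GaussianFourier.integrable_cexp_neg_mul_sq_norm_add (by simpa) _ _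
    have flip := (VectorFourier.integral_fourierIntegral_smul_eq_flip (L := innerₗ (Ed d))
      Real.continuous_fourierChar continuous_inner J hfi).symm
    have step1 : (∫ w : Ed d, Complex.exp (-(c : ℂ)⁻¹ * (‖w‖ : ℂ)^2 + 2 * Real.pi * Complex.I * (⟪(0 : Ed d), w⟫ : ℂ)) • 𝓕 f w)
        = ∫ w : Ed d, (𝓕 (fun w : Ed d ↦ Complex.exp (- (c:ℂ)⁻¹ * (‖w‖:ℂ)^2 + 2 * Real.pi * Complex.I * (⟪(0 : Ed d), w⟫ : ℂ))) w) • f w := by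
      simpa using! flip
    rw [step1]
    congr with w
    rw [fourier_gaussian_innerProductSpace' (by simpa)]
    congr 1
    · congr 1
      · simp
      · simp; ring
  have T : Tendsto (fun c : ℝ ↦ ∫ w : Ed d, ((Real.pi * c : ℂ) ^ (Module.finrank ℝ (Ed d) / 2 : ℂ) *
      Complex.exp (-(Real.pi:ℂ) ^ 2 * c * (‖(0:Ed d) - w‖:ℂ) ^ 2)) • f w) atTop (𝓝 (f 0)) :=
    Real.tendsto_integral_gaussian_smul' hfi hfc.continuousAt
  have T2 : Tendsto (fun c : ℝ => ∫ w : Ed d,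
      Complex.exp (-(c : ℂ)⁻¹ * (‖w‖:ℂ)^2 + 2 * Real.pi * Complex.I * (⟪(0:Ed d), w⟫:ℂ)) • 𝓕 f w)
      atTop (𝓝 (f 0)) := Filter.Tendsto.congr' (key.mono fun c h => h.symm) T
  set φ : ℝ → Ed d → ℝ := fun c w => ρ w * Real.exp (-c⁻¹ * ‖w‖^2) with hφdef
  have hAc : ∀ c : ℝ, (∫ w : Ed d,
      Complex.exp (-(c : ℂ)⁻¹ * (‖w‖:ℂ)^2 + 2 * Real.pi * Complex.I * (⟪(0:Ed d), w⟫:ℂ)) • 𝓕 f w)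
      = ((∫ w, φ c w : ℝ) : ℂ) := by
    intro c
    have base : ∫ w : Ed d, ((φ c w : ℝ) : ℂ) = ((∫ w, φ c w : ℝ) : ℂ) := integral_ofReal
    rw [← base]
    congr 1; ext w
    rw [hρ_eq w, smul_eq_mul, hφdef]
    simp only [inner_zero_left, Complex.ofReal_zero, mul_zero, add_zero]
    push_cast
    ring
  have T3 : Tendsto (fun c : ℝ => ∫ w, φ c w) atTop (𝓝 (ℓ 0)) := by
    have h4 := (Complex.continuous_re.tendsto (f 0)).comp T2
    have h0 : (f 0).re = ℓ 0 := by simp [hfdef]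
    rw [Function.comp_def] at h4
    rw [h0] at h4
    refine h4.congr fun c => ?_
    rw [hAc c, Complex.ofReal_re]
  have hφint : ∀ c : ℝ, 0 < c → Integrable (φ c) := by
    intro c hc
    have hg : Integrable (fun w : Ed d => Real.exp (-c⁻¹ * ‖w‖^2)) := by
      have h5 := (GaussianFourier.integrable_cexp_neg_mul_sq_norm_add
        (b := (c:ℂ)⁻¹) (by simpa) 0 (0 : Ed d)).norm
      apply h5.congr
      filter_upwards with w
      have h6 : (-(c:ℂ)⁻¹ * (‖w‖:ℂ)^2 + 0 * ((⟪(0:Ed d), w⟫ : ℝ):ℂ)) = ((-c⁻¹ * ‖w‖^2 : ℝ) : ℂ) := by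
        push_cast; ring
      rw [h6, Complex.norm_exp, Complex.ofReal_re]
    refine hg.bdd_mul hρc.aestronglyMeasurable (c := B) (ae_of_all _ fun w => ?_)
    rw [Real.norm_eq_abs, _root_.abs_of_nonneg (hρ0 w)]; exact hB w
  have hmono : ∀ w, Monotone fun n : ℕ => φ ((n:ℝ)+1) w := by
    intro w n m hnm
    apply mul_le_mul_of_nonneg_left _ (hρ0 w)
    apply Real.exp_le_exp.2
    have h1 : ((m:ℝ)+1)⁻¹ ≤ ((n:ℝ)+1)⁻¹ := by
      apply inv_anti₀ (by positivity)
      have : (n:ℝ) ≤ (m:ℝ) := by exact_mod_cast hnm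
      linarith
    nlinarith [sq_nonneg ‖w‖, norm_nonneg w]
  have htend_pt : ∀ w, Tendsto (fun n : ℕ => ENNReal.ofReal (φ ((n:ℝ)+1) w)) atTop
      (𝓝 (ENNReal.ofReal (ρ w))) := by
    intro w
    apply (ENNReal.continuous_ofReal.tendsto _).comp
    have h3 : Tendsto (fun n : ℕ => -((n:ℝ)+1)⁻¹ * ‖w‖^2) atTop (𝓝 0) := by
      have := (tendsto_atTop_add_const_right atTop (1:ℝ)
        tendsto_natCast_atTop_atTop).inv_tendsto_atTop
      simpa using (this.neg.mul_const (‖w‖^2))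
    have h2 : Tendsto (fun n : ℕ => Real.exp (-((n:ℝ)+1)⁻¹ * ‖w‖^2)) atTop (𝓝 1) := by
      simpa [Function.comp_def] using (Real.continuous_exp.tendsto 0).comp h3
    simpa [hφdef, neg_mul] using h2.const_mul (ρ w)
  have hmeasφ : ∀ n : ℕ, AEMeasurable (fun w : Ed d => ENNReal.ofReal (φ ((n:ℝ)+1) w)) := by
    intro n
    apply Continuous.aemeasurable
    exact ENNReal.continuous_ofReal.comp (hρc.mul (by fun_prop))
  have hlim := lintegral_tendsto_of_tendsto_of_monotone hmeasφ
      (ae_of_all _ fun w n m h => ENNReal.ofReal_le_ofReal (hmono w h)) (ae_of_all _ htend_pt)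
  have hbound2 : ∀ n : ℕ, (∫⁻ w, ENNReal.ofReal (φ ((n:ℝ)+1) w)) ≤ ENNReal.ofReal (ℓ 0) := by
    intro n
    rw [← ofReal_integral_eq_lintegral_ofReal (hφint _ (by positivity))
      (ae_of_all _ fun w => mul_nonneg (hρ0 w) (Real.exp_nonneg _))]
    apply ENNReal.ofReal_le_ofReal
    have hmono' : Monotone fun n : ℕ => ∫ w, φ ((n:ℝ)+1) w := fun n m hnm =>
      integral_mono (hφint _ (by positivity)) (hφint _ (by positivity)) fun w => hmono w hnm
    have hT : Tendsto (fun n : ℕ => ∫ w, φ ((n:ℝ)+1) w) atTop (𝓝 (ℓ 0)) :=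
      T3.comp (tendsto_atTop_add_const_right atTop 1 tendsto_natCast_atTop_atTop)
    exact hmono'.ge_of_tendsto hT n
  have hfin : (∫⁻ w, ENNReal.ofReal (ρ w)) < ⊤ :=
    lt_of_le_of_lt (le_of_tendsto' hlim hbound2) ofReal_lt_top
  refine ⟨(fourier_cont hL1).aestronglyMeasurable, ?_⟩
  rw [hasFiniteIntegral_iff_norm]
  have hn : ∀ w, ‖𝓕 f w‖ = ρ w := fun w => by
    rw [hρ_eq w, Complex.norm_real, Real.norm_eq_abs, _root_.abs_of_nonneg (hρ0 w)]
  calc (∫⁻ w, ENNReal.ofReal ‖𝓕 f w‖) = ∫⁻ w, ENNReal.ofReal (ρ w) := by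
        apply lintegral_congr; intro w; rw [hn w]
    _ < ⊤ := hfin

end Helpers

/-- Lemma 2.11, bilinear form (regular case): for even nonnegative
`ℓ ∈ C_b ∩ L¹` with `ℓ̂ ≥ 0` and probability measures `Q, Q̃` each of finite
self-energy, one has `ℓ̂ Q̂ conj(Q̃̂) ∈ L¹` and
`∫∫ ℓ(x-y) dQ(x) dQ̃(y) = (2π)^{-d} ∫ ℓ̂(z) Q̂(z) conj(Q̃̂(z)) dz`. -/
theorem fourier_identity_bilinear
    {d : ℕ} (hd : 1 ≤ d) (ℓ : Ed d → ℝ)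
    (hnonneg : ∀ z, 0 ≤ ℓ z) (heven : ∀ z, ℓ (-z) = ℓ z)
    (hcont : Continuous ℓ) (hL1 : Integrable ℓ) (hbdd : ∃ M : ℝ, ∀ z, ℓ z ≤ M)
    (hft : ∀ k : Ed d, ∃ r : ℝ, 0 ≤ r ∧ ftL d ℓ k = (r : ℂ))
    (Q Qt : Measure (Ed d)) [IsProbabilityMeasure Q] [IsProbabilityMeasure Qt]
    (hfinQ : ∫⁻ x, ∫⁻ y, ENNReal.ofReal (ℓ (x - y)) ∂Q ∂Q < ⊤)
    (hfinQt : ∫⁻ x, ∫⁻ y, ENNReal.ofReal (ℓ (x - y)) ∂Qt ∂Qt < ⊤) :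
    Integrable (fun z : Ed d => ftL d ℓ z * ftM Q z * (starRingEnd ℂ) (ftM Qt z)) ∧
    (((∫⁻ x, ∫⁻ y, ENNReal.ofReal (ℓ (x - y)) ∂Qt ∂Q).toReal : ℂ)
      = ((2 * Real.pi : ℂ) ^ d)⁻¹ *
          ∫ z : Ed d, ftL d ℓ z * ftM Q z * (starRingEnd ℂ) (ftM Qt z)) := by

  obtain ⟨M, hM⟩ := hbdd
  set f : Ed d → ℂ := fun x => (ℓ x : ℂ) with hfdef
  have hfi : Integrable f := hL1.ofReal
  have hfc : Continuous f := Complex.continuous_ofReal.comp hcont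
  have h'f : Integrable (𝓕 f) := fourier_integrable hcont hL1 hft
  have h'fc : Continuous (𝓕 f) := fourier_cont hL1
  set G : Ed d → ℂ := fun z => ftL d ℓ z * ftM Q z * (starRingEnd ℂ) (ftM Qt z) with hGdef
  -- integrability of G
  have hftL_eq : ftL d ℓ = fun z => 𝓕 f ((2 * Real.pi)⁻¹ • z) :=
    funext fun z => ftL_eq ℓ z
  have hftLc : Continuous (ftL d ℓ) := by
    rw [hftL_eq]; exact h'fc.comp (continuous_const_smul _)
  have hftLint : Integrable (ftL d ℓ) := by
    rw [hftL_eq]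
    exact h'f.comp_smul (R := (2 * Real.pi)⁻¹) (by positivity : (0:ℝ) < (2 * Real.pi)⁻¹).ne'
  have hGc : Continuous G := by
    apply (hftLc.mul (ftM_continuous Q)).mul
    exact Complex.continuous_conj.comp (ftM_continuous Qt)
  have hGint : Integrable G := by
    apply Integrable.mono' hftLint.norm hGc.aestronglyMeasurable
    filter_upwards with z
    show ‖ftL d ℓ z * ftM Q z * (starRingEnd ℂ) (ftM Qt z)‖ ≤ ‖ftL d ℓ z‖
    simp only [norm_mul, RCLike.norm_conj]
    have h1 := ftM_norm_le Q z
    have h2 := ftM_norm_le Qt z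
    have h3 := norm_nonneg (ftL d ℓ z)
    have h4 := norm_nonneg (ftM Q z)
    calc ‖ftL d ℓ z‖ * ‖ftM Q z‖ * ‖ftM Qt z‖
        ≤ ‖ftL d ℓ z‖ * ‖ftM Q z‖ * 1 := mul_le_mul_of_nonneg_left h2 (mul_nonneg h3 h4)
      _ = ‖ftL d ℓ z‖ * ‖ftM Q z‖ := mul_one _
      _ ≤ ‖ftL d ℓ z‖ * 1 := mul_le_mul_of_nonneg_left h1 h3
      _ = ‖ftL d ℓ z‖ := mul_one _
  refine ⟨hGint, ?_⟩
  -- double integral to product measure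
  set μ2 : Measure (Ed d × Ed d) := Q.prod Qt with hμ2
  have hcont2 : Continuous fun p : Ed d × Ed d => ℓ (p.1 - p.2) :=
    hcont.comp (continuous_fst.sub continuous_snd)
  have hmeas2 : Measurable fun p : Ed d × Ed d => ENNReal.ofReal (ℓ (p.1 - p.2)) :=
    ENNReal.measurable_ofReal.comp hcont2.measurable
  have step1 : (∫⁻ x, ∫⁻ y, ENNReal.ofReal (ℓ (x - y)) ∂Qt ∂Q)
      = ∫⁻ p, ENNReal.ofReal (ℓ (p.1 - p.2)) ∂μ2 :=
    (lintegral_prod _ hmeas2.aemeasurable).symm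
  have step2 : (∫⁻ p, ENNReal.ofReal (ℓ (p.1 - p.2)) ∂μ2).toReal
      = ∫ p, ℓ (p.1 - p.2) ∂μ2 :=
    (integral_eq_lintegral_of_nonneg_ae (ae_of_all _ fun p => hnonneg _)
      hcont2.aestronglyMeasurable).symm
  -- Fourier inversion pointwise
  have hinv : ∀ x : Ed d, (ℓ x : ℂ)
      = ∫ v : Ed d, Complex.exp (((2 * Real.pi * ⟪v, x⟫ : ℝ) : ℂ) * Complex.I) • 𝓕 f v := by
    intro x
    have h7 := hfc.fourierInv_fourier_eq hfi h'f
    calc (ℓ x : ℂ) = 𝓕⁻ (𝓕 f) x := by rw [h7]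
      _ = _ := Real.fourierInv_eq' _ _
  -- Fubini integrability
  have hF : Integrable (Function.uncurry fun (p : Ed d × Ed d) (v : Ed d) =>
      Complex.exp (((2 * Real.pi * ⟪v, p.1 - p.2⟫ : ℝ) : ℂ) * Complex.I) • 𝓕 f v)
      (μ2.prod volume) := by
    constructor
    · apply Continuous.aestronglyMeasurable
      refine Continuous.smul (f := fun q : (Ed d × Ed d) × Ed d =>
        Complex.exp (((2 * Real.pi * ⟪q.2, q.1.1 - q.1.2⟫ : ℝ) : ℂ) * Complex.I))
        (g := fun q : (Ed d × Ed d) × Ed d => 𝓕 f q.2) ?_ ?_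
      · apply Complex.continuous_exp.comp
        apply Continuous.mul _ continuous_const
        apply Complex.continuous_ofReal.comp
        apply Continuous.mul continuous_const
        exact continuous_inner.comp ((continuous_snd).prodMk
          ((continuous_fst.fst).sub continuous_fst.snd))
      · exact h'fc.comp continuous_snd
    · rw [hasFiniteIntegral_iff_norm]
      have heq : ∀ q : (Ed d × Ed d) × Ed d,
          ENNReal.ofReal ‖Complex.exp (((2 * Real.pi * ⟪q.2, q.1.1 - q.1.2⟫ : ℝ) : ℂ) * Complex.I) • 𝓕 f q.2‖
          = ENNReal.ofReal ‖𝓕 f q.2‖ := by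
        intro q
        congr 1
        rw [norm_smul, Complex.norm_exp]
        simp
      have hmeasn : Measurable fun q : (Ed d × Ed d) × Ed d => ENNReal.ofReal ‖𝓕 f q.2‖ :=
        ENNReal.measurable_ofReal.comp ((h'fc.norm.comp continuous_snd).measurable)
      calc (∫⁻ q, ENNReal.ofReal ‖Function.uncurry (fun (p : Ed d × Ed d) (v : Ed d) =>
              Complex.exp (((2 * Real.pi * ⟪v, p.1 - p.2⟫ : ℝ) : ℂ) * Complex.I) • 𝓕 f v) q‖
              ∂(μ2.prod volume))
          = ∫⁻ q, ENNReal.ofReal ‖𝓕 f q.2‖ ∂(μ2.prod volume) :=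
            lintegral_congr fun q => heq q
        _ = ∫⁻ _, (∫⁻ v, ENNReal.ofReal ‖𝓕 f v‖) ∂μ2 := lintegral_prod _ hmeasn.aemeasurable
        _ = ∫⁻ v, ENNReal.ofReal ‖𝓕 f v‖ := by
            rw [lintegral_const]
            simp
        _ < ⊤ := by rw [← hasFiniteIntegral_iff_norm]; exact h'f.2
  -- swap and compute the inner integral
  have step3 : ∫ p, f (p.1 - p.2) ∂μ2
      = ∫ v : Ed d, (∫ p, Complex.exp (((2 * Real.pi * ⟪v, p.1 - p.2⟫ : ℝ) : ℂ) * Complex.I) ∂μ2) • 𝓕 f v := by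
    rw [integral_congr_ae (ae_of_all _ fun p : Ed d × Ed d => hinv (p.1 - p.2))]
    rw [integral_integral_swap hF]
    congr 1; ext v
    exact integral_smul_const _ _
  have hQside : ∀ v : Ed d, (∫ x, Complex.exp (((2 * Real.pi * ⟪v, x⟫ : ℝ) : ℂ) * Complex.I) ∂Q)
      = (starRingEnd ℂ) (ftM Q ((2 * Real.pi) • v)) := by
    intro v
    unfold ftM
    rw [← integral_conj]
    apply integral_congr_ae
    filter_upwards with x
    rw [← Complex.exp_conj]
    congr 1
    have h8 : (inner ℝ x ((2 * Real.pi) • v) : ℝ) = 2 * Real.pi * ⟪v, x⟫ := by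
      rw [real_inner_smul_right, real_inner_comm]
    rw [map_neg, map_mul, Complex.conj_I, Complex.conj_ofReal, h8]
    ring
  have hQtside : ∀ v : Ed d, (∫ y, Complex.exp (((-(2 * Real.pi * ⟪v, y⟫) : ℝ) : ℂ) * Complex.I) ∂Qt)
      = ftM Qt ((2 * Real.pi) • v) := by
    intro v
    unfold ftM
    apply integral_congr_ae
    filter_upwards with y
    congr 1
    have h8 : (inner ℝ y ((2 * Real.pi) • v) : ℝ) = 2 * Real.pi * ⟪v, y⟫ := by
      rw [real_inner_smul_right, real_inner_comm]
    rw [h8]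
    push_cast
    ring
  have hprod : ∀ v : Ed d,
      (∫ p, Complex.exp (((2 * Real.pi * ⟪v, p.1 - p.2⟫ : ℝ) : ℂ) * Complex.I) ∂μ2)
      = (starRingEnd ℂ) (ftM Q ((2 * Real.pi) • v)) * ftM Qt ((2 * Real.pi) • v) := by
    intro v
    have hsplit : ∀ p : Ed d × Ed d,
        Complex.exp (((2 * Real.pi * ⟪v, p.1 - p.2⟫ : ℝ) : ℂ) * Complex.I)
        = Complex.exp (((2 * Real.pi * ⟪v, p.1⟫ : ℝ) : ℂ) * Complex.I) *
          Complex.exp (((-(2 * Real.pi * ⟪v, p.2⟫) : ℝ) : ℂ) * Complex.I) := by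
      intro p
      rw [← Complex.exp_add]
      congr 1
      rw [inner_sub_right]
      push_cast
      ring
    rw [integral_congr_ae (ae_of_all _ hsplit), hμ2,
      integral_prod_mul (μ := Q) (ν := Qt)
        (f := fun x => Complex.exp (((2 * Real.pi * ⟪v, x⟫ : ℝ) : ℂ) * Complex.I))
        (g := fun y => Complex.exp (((-(2 * Real.pi * ⟪v, y⟫) : ℝ) : ℂ) * Complex.I)),
      hQside v, hQtside v]
  -- identify with conj (G (2π v))
  have step4 : ∀ v : Ed d,
      ((starRingEnd ℂ) (ftM Q ((2 * Real.pi) • v)) * ftM Qt ((2 * Real.pi) • v)) • 𝓕 f v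
      = (starRingEnd ℂ) (G ((2 * Real.pi) • v)) := by
    intro v
    obtain ⟨r, hr0, hr⟩ := hft ((2 * Real.pi) • v)
    have h9 : 𝓕 f v = (r : ℂ) := by rw [hfdef, fourier_eq_ftL, hr]
    rw [hGdef, smul_eq_mul, h9]
    simp only [map_mul, Complex.conj_conj, hr, Complex.conj_ofReal]
    ring
  -- change of variables
  have hfinrank : Module.finrank ℝ (Ed d) = d := by simp [finrank_euclideanSpace]
  have step5 : ∫ v : Ed d, G ((2 * Real.pi) • v) = (((2 * Real.pi) ^ d)⁻¹ : ℝ) • ∫ z, G z := by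
    rw [Measure.integral_comp_smul volume G (2 * Real.pi), hfinrank]
    congr 1
    rw [abs_of_pos]
    positivity
  -- assemble
  rw [step1, step2]
  have hchain : ((∫ p, ℓ (p.1 - p.2) ∂μ2 : ℝ) : ℂ)
      = (starRingEnd ℂ) ((((2 * Real.pi) ^ d)⁻¹ : ℝ) • ∫ z, G z) := by
    calc ((∫ p, ℓ (p.1 - p.2) ∂μ2 : ℝ) : ℂ)
        = ∫ p, f (p.1 - p.2) ∂μ2 := integral_ofReal.symm
      _ = ∫ v : Ed d, (∫ p, Complex.exp (((2 * Real.pi * ⟪v, p.1 - p.2⟫ : ℝ) : ℂ) * Complex.I) ∂μ2) • 𝓕 f v := step3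
      _ = ∫ v : Ed d, (starRingEnd ℂ) (G ((2 * Real.pi) • v)) := by
          apply integral_congr_ae
          filter_upwards with v
          rw [hprod v, step4 v]
      _ = (starRingEnd ℂ) (∫ v : Ed d, G ((2 * Real.pi) • v)) := integral_conj
      _ = (starRingEnd ℂ) ((((2 * Real.pi) ^ d)⁻¹ : ℝ) • ∫ z, G z) := by rw [step5]
  have hconj := congrArg (starRingEnd ℂ) hchain
  rw [Complex.conj_ofReal, Complex.conj_conj] at hconj
  rw [hconj]
  rw [Complex.real_smul]
  push_cast
  ring
end
end

section
/- A symmetric Borel probability measure μ₂ on ℝ^d × ℝ^d is infinitely representable if and only if it is N-representable for every integer N ≥ 2. -/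
open MeasureTheory ENNReal Filter Topology ProbabilityTheory

noncomputable section

/-- `μ₂` is `N`-representable: it is the two-coordinate marginal of a symmetric
probability measure on `(ℝ^d)^N`. -/
def NRep {d : ℕ} (N : ℕ) (μ₂ : Measure (Ed d × Ed d)) : Prop :=
  ∃ γ : Measure (Fin N → Ed d), IsProbabilityMeasure γ ∧ IsSymmetricN γ ∧
    ∀ i j : Fin N, i ≠ j → γ.map (fun x => (x i, x j)) = μ₂

/-- `μ₂` is infinitely representable: it is the two-coordinate marginal of an
exchangeable probability measure on `(ℝ^d)^ℕ`. -/
def InfRep {d : ℕ} (μ₂ : Measure (Ed d × Ed d)) : Prop :=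
  ∃ γ : Measure (ℕ → Ed d), IsProbabilityMeasure γ ∧ IsExchangeable γ ∧
    ∀ i j : ℕ, i ≠ j → γ.map (fun x => (x i, x j)) = μ₂

section Aux3p3
open BoundedContinuousFunction NNReal TopologicalSpace
variable {d : ℕ}

def KK (d : ℕ) : Set (Ed d) := Metric.closedBall 0 1
abbrev XX (d : ℕ) := ℕ → KK d
instance : CompactSpace (KK d) := isCompact_iff_compactSpace.mp (isCompact_closedBall 0 1)

lemma exists_bcf_one_zero {C V : Set (XX d)} (hC : IsClosed C) (hV : IsClosed V)
    (hd : Disjoint C V) :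
    ∃ u : XX d →ᵇ ℝ≥0, (∀ x ∈ C, u x = 1) ∧ (∀ x ∈ V, u x = 0) ∧ (∀ x, u x ≤ 1) := by
  obtain ⟨g, hg0, hg1, hgI⟩ := exists_continuous_zero_one_of_isClosed hV hC hd.symm
  refine ⟨mkOfCompact ⟨fun x => Real.toNNReal (g x), continuous_real_toNNReal.comp g.continuous⟩, ?_, ?_, ?_⟩
  · intro x hx
    simp [hg1 hx]
  · intro x hx
    simp [hg0 hx]
  · intro x
    have := (hgI x).2
    simpa using Real.toNNReal_le_one.mpr this
def bcfC : CompactlySupportedContinuousMap (XX d) ℝ≥0 →ₗ[ℝ≥0] (XX d →ᵇ ℝ≥0) where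
  toFun f := mkOfCompact ⟨f, f.continuous⟩
  map_add' f g := by ext x; rfl
  map_smul' c f := by ext x; rfl

def cfcB (g : XX d →ᵇ ℝ≥0) : CompactlySupportedContinuousMap (XX d) ℝ≥0 :=
  CompactlySupportedContinuousMap.continuousMapEquiv g.toContinuousMap

@[simp] lemma bcfC_apply (f : CompactlySupportedContinuousMap (XX d) ℝ≥0) (x : XX d) : bcfC f x = f x := rfl
@[simp] lemma cfcB_apply (g : XX d →ᵇ ℝ≥0) (x : XX d) : cfcB g x = g x := rfl
lemma bcfC_cfcB (g : XX d →ᵇ ℝ≥0) : bcfC (cfcB g) = g := by ext x; rfl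

lemma bcf_meas (f : XX d →ᵇ ℝ≥0) : Measurable (fun x => (f x : ℝ≥0∞)) :=
  (ENNReal.continuous_coe.comp f.continuous).measurable

section Limits
variable (ν : ℕ → Measure (XX d)) (𝒰 : Ultrafilter ℕ)

/-- ultrafilter limit of the integrals of `f`. -/
def LL (f : XX d →ᵇ ℝ≥0) : ℝ≥0∞ := (𝒰.map (fun N => ∫⁻ x, (f x : ℝ≥0∞) ∂ν N)).lim

lemma tendsto_LL (f : XX d →ᵇ ℝ≥0) :
    Tendsto (fun N => ∫⁻ x, (f x : ℝ≥0∞) ∂ν N) ↑𝒰 (𝓝 (LL ν 𝒰 f)) := by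
  have h := (𝒰.map (fun N => ∫⁻ x, (f x : ℝ≥0∞) ∂ν N)).le_nhds_lim
  rwa [Ultrafilter.coe_map] at h

lemma LL_eq {f : XX d →ᵇ ℝ≥0} {c : ℝ≥0∞}
    (h : Tendsto (fun N => ∫⁻ x, (f x : ℝ≥0∞) ∂ν N) ↑𝒰 (𝓝 c)) : LL ν 𝒰 f = c :=
  tendsto_nhds_unique (tendsto_LL ν 𝒰 f) h

variable [hν : ∀ N, IsProbabilityMeasure (ν N)]

lemma lintegral_bcf_le (f : XX d →ᵇ ℝ≥0) (N : ℕ) :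
    ∫⁻ x, (f x : ℝ≥0∞) ∂ν N ≤ (nndist f 0 : ℝ≥0∞) := by
  calc ∫⁻ x, (f x : ℝ≥0∞) ∂ν N ≤ ∫⁻ _, (nndist f 0 : ℝ≥0∞) ∂ν N := by
        apply lintegral_mono
        intro x
        exact ENNReal.coe_le_coe.mpr (NNReal.upper_bound f x)
    _ = (nndist f 0 : ℝ≥0∞) := by simp
lemma LL_ne_top (f : XX d →ᵇ ℝ≥0) : LL ν 𝒰 f ≠ ⊤ := by
  have : LL ν 𝒰 f ≤ (nndist f 0 : ℝ≥0∞) :=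
    le_of_tendsto (tendsto_LL ν 𝒰 f) (Eventually.of_forall (lintegral_bcf_le ν f))
  exact ne_top_of_le_ne_top ENNReal.coe_ne_top this

lemma LL_add (f g : XX d →ᵇ ℝ≥0) : LL ν 𝒰 (f + g) = LL ν 𝒰 f + LL ν 𝒰 g := by
  apply LL_eq
  have : (fun N => ∫⁻ x, ((f + g) x : ℝ≥0∞) ∂ν N)
      = fun N => (∫⁻ x, (f x : ℝ≥0∞) ∂ν N) + ∫⁻ x, (g x : ℝ≥0∞) ∂ν N := by
    funext N
    rw [← lintegral_add_left (bcf_meas f)]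
    simp
  rw [this]
  exact (tendsto_LL ν 𝒰 f).add (tendsto_LL ν 𝒰 g)

lemma LL_smul (c : ℝ≥0) (f : XX d →ᵇ ℝ≥0) : LL ν 𝒰 (c • f) = (c : ℝ≥0∞) * LL ν 𝒰 f := by
  apply LL_eq
  have : (fun N => ∫⁻ x, ((c • f) x : ℝ≥0∞) ∂ν N)
      = fun N => (c : ℝ≥0∞) * ∫⁻ x, (f x : ℝ≥0∞) ∂ν N := by
    funext N
    rw [← lintegral_const_mul _ (bcf_meas f)]
    simp [ENNReal.coe_mul]
  rw [this]
  exact ENNReal.Tendsto.const_mul (tendsto_LL ν 𝒰 f) (Or.inr ENNReal.coe_ne_top)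

/-- the positive linear functional obtained as ultrafilter limit. -/
def Lam : (XX d →ᵇ ℝ≥0) →ₗ[ℝ≥0] ℝ≥0 where
  toFun f := (LL ν 𝒰 f).toNNReal
  map_add' f g := by
    simp only [LL_add ν 𝒰 f g]
    rw [ENNReal.toNNReal_add (LL_ne_top ν 𝒰 f) (LL_ne_top ν 𝒰 g)]
  map_smul' c f := by
    simp only [LL_smul ν 𝒰 c f, RingHom.id_apply, smul_eq_mul]
    rw [ENNReal.toNNReal_mul, ENNReal.toNNReal_coe]

def LamC : CompactlySupportedContinuousMap (XX d) ℝ≥0 →ₗ[ℝ≥0] ℝ≥0 := (Lam ν 𝒰).comp bcfC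

lemma LamC_cfcB (g : XX d →ᵇ ℝ≥0) : LamC ν 𝒰 (cfcB g) = Lam ν 𝒰 g := by
  simp only [LamC, LinearMap.comp_apply, bcfC_cfcB]

lemma Lam_apply (f : XX d →ᵇ ℝ≥0) : Lam ν 𝒰 f = (LL ν 𝒰 f).toNNReal := rfl

lemma coe_Lam (f : XX d →ᵇ ℝ≥0) : (Lam ν 𝒰 f : ℝ≥0∞) = LL ν 𝒰 f :=
  ENNReal.coe_toNNReal (LL_ne_top ν 𝒰 f)

lemma one_le_LL {f : XX d →ᵇ ℝ≥0} (hf : ∀ x, 1 ≤ f x) : 1 ≤ LL ν 𝒰 f := by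
  apply ge_of_tendsto (tendsto_LL ν 𝒰 f)
  apply Eventually.of_forall
  intro N
  calc (1 : ℝ≥0∞) = ∫⁻ _, 1 ∂ν N := by simp
    _ ≤ ∫⁻ x, (f x : ℝ≥0∞) ∂ν N := lintegral_mono fun x => by
        simpa using ENNReal.coe_le_coe.mpr (hf x)

lemma LL_one : LL ν 𝒰 (1 : XX d →ᵇ ℝ≥0) = 1 := by
  apply LL_eq
  have : (fun N => ∫⁻ x, ((1 : XX d →ᵇ ℝ≥0) x : ℝ≥0∞) ∂ν N) = fun _ => (1:ℝ≥0∞) := by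
    funext N; simp
  rw [this]
  exact tendsto_const_nhds

end Limits

section Cont
variable (ν : ℕ → Measure (XX d)) (𝒰 : Ultrafilter ℕ) [hν : ∀ N, IsProbabilityMeasure (ν N)]

/-- the content associated to the limit functional. -/
def cont : Content (XX d) where
  toFun := rieszContentAux (LamC ν 𝒰)
  mono' _ _ h := rieszContentAux_mono _ h
  sup_le' := rieszContentAux_sup_le _
  sup_disjoint' K₁ K₂ hd h₁ h₂ := by
    refine le_antisymm (rieszContentAux_sup_le _ K₁ K₂) ?_
    apply le_csInf (rieszContentAux_image_nonempty _ _)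
    rintro b ⟨f, hf, rfl⟩
    obtain ⟨u, hu1, hu0, hule⟩ := exists_bcf_one_zero h₁ h₂ hd
    set v : XX d →ᵇ ℝ≥0 :=
      mkOfCompact ⟨fun x => 1 - u x, continuous_const.sub u.continuous⟩ with hv
    set F : XX d →ᵇ ℝ≥0 := bcfC f with hF
    have hsum : F * u + F * v = F := by
      apply DFunLike.ext
      intro x
      show f x * u x + f x * (1 - u x) = f x
      rw [← mul_add, add_tsub_cancel_of_le (hule x), mul_one]
    have hf₁ : ∀ x ∈ K₁, (1:ℝ≥0) ≤ cfcB (F * u) x := by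
      intro x hx
      have : cfcB (F * u) x = f x := by simp [hF, hu1 x hx]
      rw [this]
      exact hf x (Or.inl hx)
    have hf₂ : ∀ x ∈ K₂, (1:ℝ≥0) ≤ cfcB (F * v) x := by
      intro x hx
      have : cfcB (F * v) x = f x := by simp [hF, hv, hu0 x hx]
      rw [this]
      exact hf x (Or.inr hx)
    calc rieszContentAux (LamC ν 𝒰) K₁ + rieszContentAux (LamC ν 𝒰) K₂
        ≤ LamC ν 𝒰 (cfcB (F * u)) + LamC ν 𝒰 (cfcB (F * v)) :=
          add_le_add (rieszContentAux_le _ hf₁) (rieszContentAux_le _ hf₂)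
      _ = Lam ν 𝒰 (F * u) + Lam ν 𝒰 (F * v) := by rw [LamC_cfcB, LamC_cfcB]
      _ = Lam ν 𝒰 (F * u + F * v) := (map_add _ _ _).symm
      _ = Lam ν 𝒰 F := by rw [hsum]

/-- the candidate limit measure. -/
def limMeasure : Measure (XX d) := (cont ν 𝒰).measure

set_option maxHeartbeats 1000000 in
lemma limMeasure_univ : limMeasure ν 𝒰 Set.univ = 1 := by
  have h1 : limMeasure ν 𝒰 Set.univ = (cont ν 𝒰).outerMeasure Set.univ :=
    Content.measure_apply _ MeasurableSet.univ
  have h2 := Content.outerMeasure_opens (cont ν 𝒰) ⟨Set.univ, isOpen_univ⟩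
  rw [TopologicalSpace.Opens.coe_mk] at h2
  have h3 : (cont ν 𝒰).innerContent ⟨Set.univ, isOpen_univ⟩
      = cont ν 𝒰 ⟨Set.univ, isCompact_univ⟩ :=
    Content.innerContent_of_isCompact _ isCompact_univ isOpen_univ
  have h4 : rieszContentAux (LamC ν 𝒰) ⟨Set.univ, isCompact_univ⟩ = 1 := by
    apply le_antisymm
    · have h1' : Lam ν 𝒰 (1 : XX d →ᵇ ℝ≥0) = 1 := by
        rw [Lam_apply, LL_one]
        rfl
      refine le_trans (rieszContentAux_le _ (f := cfcB 1) ?_) (le_of_eq ((LamC_cfcB ν 𝒰 1).trans h1'))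
      intro x _
      rfl
    · apply le_csInf (rieszContentAux_image_nonempty _ _)
      rintro b ⟨f, hf, rfl⟩
      have h1le : (1:ℝ≥0∞) ≤ LL ν 𝒰 (bcfC f) := one_le_LL ν 𝒰 (fun x => hf x trivial)
      show 1 ≤ Lam ν 𝒰 (bcfC f)
      have := ENNReal.toNNReal_mono (LL_ne_top ν 𝒰 (bcfC f)) h1le
      rw [Lam_apply]
      exact le_trans (le_of_eq (by simp)) this
  rw [h1, h2, h3]
  show ((rieszContentAux (LamC ν 𝒰) ⟨Set.univ, isCompact_univ⟩ : ℝ≥0) : ℝ≥0∞) = 1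
  rw [h4]
  rfl

instance : IsProbabilityMeasure (limMeasure ν 𝒰) := ⟨limMeasure_univ ν 𝒰⟩

end Cont

section Props
variable (ν : ℕ → Measure (XX d)) (𝒰 : Ultrafilter ℕ) [hν : ∀ N, IsProbabilityMeasure (ν N)]

/-- coordinate permutation as a homeomorphism of `XX d`. -/
def permHomeo (σ : Equiv.Perm ℕ) : XX d ≃ₜ XX d where
  toFun y n := y (σ n)
  invFun y n := y (σ⁻¹ n)
  left_inv y := by funext n; simp
  right_inv y := by funext n; simp
  continuous_toFun := continuous_pi fun n => continuous_apply (σ n)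
  continuous_invFun := continuous_pi fun n => continuous_apply (σ⁻¹ n)

lemma LL_comp_perm (σ : Equiv.Perm ℕ) (h𝒰 : ↑𝒰 ≤ (atTop : Filter ℕ))
    (hinv : ∀ᶠ N in atTop, (ν N).map (fun y n => y (σ n)) = ν N) (f : XX d →ᵇ ℝ≥0) :
    LL ν 𝒰 (f.compContinuous ⟨permHomeo (d := d) σ, (permHomeo (d := d) σ).continuous⟩) = LL ν 𝒰 f := by
  apply LL_eq
  have hev : (fun N => ∫⁻ x, ((f.compContinuous ⟨permHomeo (d := d) σ, (permHomeo (d := d) σ).continuous⟩) x : ℝ≥0∞)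
        ∂ν N) =ᶠ[↑𝒰] fun N => ∫⁻ x, (f x : ℝ≥0∞) ∂ν N := by
    apply h𝒰
    filter_upwards [hinv] with N hN
    have hmeas : Measurable (fun (y : XX d) (n : ℕ) => y (σ n)) :=
      measurable_pi_lambda _ fun n => measurable_pi_apply _
    calc ∫⁻ x, ((f.compContinuous ⟨permHomeo (d := d) σ, (permHomeo (d := d) σ).continuous⟩) x : ℝ≥0∞) ∂ν N
        = ∫⁻ x, (f x : ℝ≥0∞) ∂(ν N).map (fun y n => y (σ n)) := by
          rw [lintegral_map (bcf_meas f) hmeas]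
          rfl
      _ = ∫⁻ x, (f x : ℝ≥0∞) ∂ν N := by rw [hN]
  exact Tendsto.congr' hev.symm (tendsto_LL ν 𝒰 f)

lemma contentAux_map_le (σ : Equiv.Perm ℕ) (h𝒰 : ↑𝒰 ≤ (atTop : Filter ℕ))
    (hinv : ∀ᶠ N in atTop, (ν N).map (fun y n => y (σ n)) = ν N) (K : Compacts (XX d)) :
    rieszContentAux (LamC ν 𝒰)
      (K.map (permHomeo (d := d) σ) (permHomeo (d := d) σ).continuous)
      ≤ rieszContentAux (LamC ν 𝒰) K := by
  apply le_csInf (rieszContentAux_image_nonempty _ _)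
  rintro b ⟨f, hf, rfl⟩
  set T := permHomeo (d := d) σ with hT
  -- f ∘ T⁻¹ is ≥ 1 on T(K)
  have h1 : ∀ x ∈ (K.map T T.continuous : Set (XX d)),
      (1:ℝ≥0) ≤ cfcB ((bcfC f).compContinuous ⟨T.symm, T.symm.continuous⟩) x := by
    rintro x ⟨y, hy, rfl⟩
    have : cfcB ((bcfC f).compContinuous ⟨T.symm, T.symm.continuous⟩) (T y) = f y := by
      simp [compContinuous_apply]
    rw [this]
    exact hf y hy
  refine le_trans (rieszContentAux_le _ h1) (le_of_eq ?_)
  -- Λ (f ∘ T⁻¹) = Λ f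
  have hinv' : ∀ᶠ N in atTop, (ν N).map (fun y n => y (σ⁻¹ n)) = ν N := by
    filter_upwards [hinv] with N hN
    have hmeasσ : Measurable (fun (y : XX d) (n : ℕ) => y (σ n)) :=
      measurable_pi_lambda _ fun n => measurable_pi_apply _
    have hmeasσ' : Measurable (fun (y : XX d) (n : ℕ) => y (σ⁻¹ n)) :=
      measurable_pi_lambda _ fun n => measurable_pi_apply _
    conv_lhs => rw [← hN]
    rw [Measure.map_map hmeasσ' hmeasσ]
    have : ((fun (y : XX d) (n : ℕ) => y (σ⁻¹ n)) ∘ (fun (y : XX d) (n : ℕ) => y (σ n))) = id := by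
      funext y
      funext n
      simp
    rw [this, Measure.map_id]
  have hLL := LL_comp_perm ν 𝒰 σ⁻¹ h𝒰 hinv' (bcfC f)
  have hTs : (permHomeo (d := d) σ⁻¹) = T.symm := by
    ext y n
    rfl
  rw [hTs] at hLL
  rw [LamC_cfcB]
  show Lam ν 𝒰 _ = Lam ν 𝒰 (bcfC f)
  rw [Lam_apply, Lam_apply, hLL]

lemma limMeasure_perm (σ : Equiv.Perm ℕ) (h𝒰 : ↑𝒰 ≤ (atTop : Filter ℕ))
    (hinv : ∀ᶠ N in atTop, (ν N).map (fun y n => y (σ n)) = ν N) :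
    (limMeasure ν 𝒰).map (fun y n => y (σ n)) = limMeasure ν 𝒰 := by
  set T := permHomeo (d := d) σ with hT
  have hinv' : ∀ᶠ N in atTop, (ν N).map (fun y n => y (σ⁻¹ n)) = ν N := by
    filter_upwards [hinv] with N hN
    have hmeasσ : Measurable (fun (y : XX d) (n : ℕ) => y (σ n)) :=
      measurable_pi_lambda _ fun n => measurable_pi_apply _
    have hmeasσ' : Measurable (fun (y : XX d) (n : ℕ) => y (σ⁻¹ n)) :=
      measurable_pi_lambda _ fun n => measurable_pi_apply _
    conv_lhs => rw [← hN]
    rw [Measure.map_map hmeasσ' hmeasσ]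
    have : ((fun (y : XX d) (n : ℕ) => y (σ⁻¹ n)) ∘ (fun (y : XX d) (n : ℕ) => y (σ n))) = id := by
      funext y; funext n; simp
    rw [this, Measure.map_id]
  have hcont : ∀ ⦃K : Compacts (XX d)⦄, cont ν 𝒰 (K.map T T.continuous) = cont ν 𝒰 K := by
    intro K
    have hle1 := contentAux_map_le ν 𝒰 σ h𝒰 hinv K
    have hle2 := contentAux_map_le ν 𝒰 σ⁻¹ h𝒰 hinv' (K.map T T.continuous)
    have hTs : (permHomeo (d := d) σ⁻¹) = T.symm := by ext y n; rfl
    rw [hTs] at hle2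
    have hKK : (K.map T T.continuous).map T.symm T.symm.continuous = K := by
      apply Compacts.ext
      simp only [Compacts.coe_map, Set.image_image]
      have : (⇑T.symm ∘ ⇑T) = id := by funext y; simp
      simp [Function.comp_def]
    rw [hKK] at hle2
    have heq := le_antisymm hle1 hle2
    show ((rieszContentAux (LamC ν 𝒰) (K.map T T.continuous) : ℝ≥0) : ℝ≥0∞)
        = ((rieszContentAux (LamC ν 𝒰) K : ℝ≥0) : ℝ≥0∞)
    exact_mod_cast heq
  apply Measure.ext
  intro s hs
  have hTmeas : Measurable (⇑T) := T.continuous.measurable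
  have : (fun (y : XX d) (n : ℕ) => y (σ n)) = ⇑T := rfl
  rw [this, Measure.map_apply hTmeas hs]
  show (cont ν 𝒰).measure (⇑T ⁻¹' s) = (cont ν 𝒰).measure s
  rw [Content.measure_apply _ (hTmeas hs), Content.measure_apply _ hs]
  exact Content.outerMeasure_preimage (cont ν 𝒰) T hcont s

end Props

section Marg
variable (ν : ℕ → Measure (XX d)) (𝒰 : Ultrafilter ℕ) [hν : ∀ N, IsProbabilityMeasure (ν N)]

lemma prob_one_sub_compl {α : Type*} [MeasurableSpace α] (μ : Measure α)
    [IsProbabilityMeasure μ] {s : Set α} (hs : MeasurableSet s) : 1 - μ sᶜ = μ s := by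
  rw [prob_compl_eq_one_sub hs, ENNReal.sub_sub_cancel one_ne_top prob_le_one]

lemma limMeasure_le_open (i j : ℕ) (β : Measure (KK d × KK d))
    (h𝒰 : ↑𝒰 ≤ (atTop : Filter ℕ))
    (hm : ∀ᶠ N in atTop, (ν N).map (fun y => (y i, y j)) = β)
    {U : Set (KK d × KK d)} (hU : IsOpen U) :
    limMeasure ν 𝒰 ((fun (y : XX d) => (y i, y j)) ⁻¹' U) ≤ β U := by
  set π : XX d → KK d × KK d := fun y => (y i, y j) with hπ
  have hπc : Continuous π := (continuous_apply i).prodMk (continuous_apply j)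
  have hVopen : IsOpen (π ⁻¹' U) := hU.preimage hπc
  show (cont ν 𝒰).measure (π ⁻¹' U) ≤ β U
  rw [Content.measure_apply _ hVopen.measurableSet,
    Content.outerMeasure_of_isOpen _ _ hVopen, Content.innerContent]
  refine iSup₂_le ?_
  rintro K hK
  obtain ⟨u, hu1, hu0, hule⟩ := exists_bcf_one_zero K.isCompact.isClosed
    hVopen.isClosed_compl (Set.disjoint_left.mpr fun x hxK hxc => hxc (hK hxK))
  have step1 : cont ν 𝒰 K ≤ (Lam ν 𝒰 u : ℝ≥0∞) := by
    have h' := rieszContentAux_le (LamC ν 𝒰) (K := K) (f := cfcB u) (fun x hx => le_of_eq (hu1 x hx).symm)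
    rw [LamC_cfcB] at h'
    show ((rieszContentAux (LamC ν 𝒰) K : ℝ≥0) : ℝ≥0∞) ≤ _
    exact_mod_cast h'
  refine le_trans step1 ?_
  rw [coe_Lam]
  apply le_of_tendsto (tendsto_LL ν 𝒰 u)
  apply h𝒰
  filter_upwards [hm] with N hN
  calc ∫⁻ x, (u x : ℝ≥0∞) ∂ν N
      ≤ ∫⁻ x, (π ⁻¹' U).indicator (fun _ => 1) x ∂ν N := by
        apply lintegral_mono
        intro x
        by_cases hx : x ∈ π ⁻¹' U
        · simp only [Set.indicator_of_mem hx]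
          exact_mod_cast ENNReal.coe_le_coe.mpr (hule x)
        · rw [Set.indicator_of_notMem hx]
          simp [hu0 x hx]
    _ = ν N (π ⁻¹' U) := by
        rw [lintegral_indicator hVopen.measurableSet]
        simp
    _ = ((ν N).map π) U := (Measure.map_apply hπc.measurable hU.measurableSet).symm
    _ = β U := by rw [hN]

lemma limMeasure_pair (i j : ℕ) (β : Measure (KK d × KK d)) [IsProbabilityMeasure β]
    (h𝒰 : ↑𝒰 ≤ (atTop : Filter ℕ))
    (hm : ∀ᶠ N in atTop, (ν N).map (fun y => (y i, y j)) = β) :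
    (limMeasure ν 𝒰).map (fun (y : XX d) => (y i, y j)) = β := by
  set π : XX d → KK d × KK d := fun y => (y i, y j) with hπ
  have hπc : Continuous π := (continuous_apply i).prodMk (continuous_apply j)
  have hprob : IsProbabilityMeasure ((limMeasure ν 𝒰).map π) :=
    Measure.isProbabilityMeasure_map hπc.measurable.aemeasurable
  have hopen : ∀ U : Set (KK d × KK d), IsOpen U → ((limMeasure ν 𝒰).map π) U = β U := by
    intro U hU
    refine le_antisymm ?_ ?_
    · rw [Measure.map_apply hπc.measurable hU.measurableSet]
      exact limMeasure_le_open ν 𝒰 i j β h𝒰 hm hU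
    · have hreg := (MeasureTheory.Measure.WeaklyRegular.innerRegular (μ := β)).measure_eq_iSup hU
      rw [hreg]
      refine iSup₂_le fun F hFU => iSup_le fun hF => ?_
      have hkey : ((limMeasure ν 𝒰).map π) Fᶜ ≤ β Fᶜ := by
        rw [Measure.map_apply hπc.measurable hF.isOpen_compl.measurableSet]
        exact limMeasure_le_open ν 𝒰 i j β h𝒰 hm hF.isOpen_compl
      calc β F = 1 - β Fᶜ := (prob_one_sub_compl β hF.measurableSet).symm
        _ ≤ 1 - ((limMeasure ν 𝒰).map π) Fᶜ := tsub_le_tsub_left hkey 1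
        _ = ((limMeasure ν 𝒰).map π) F := prob_one_sub_compl _ hF.measurableSet
        _ ≤ ((limMeasure ν 𝒰).map π) U := measure_mono hFU
  apply MeasureTheory.ext_of_generate_finite {s : Set (KK d × KK d) | IsOpen s}
    BorelSpace.measurable_eq isPiSystem_isOpen
  · intro s hs
    exact hopen s hs
  · rw [hopen Set.univ isOpen_univ]

end Marg

lemma perm_lt_of_lt {σ : Equiv.Perm ℕ} {M : ℕ} (hfix : ∀ k, M ≤ k → σ k = k) {k : ℕ}
    (hk : k < M) : σ k < M := by
  by_contra hge
  push_neg at hge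
  have h2 : σ (σ k) = σ k := hfix _ hge
  have h3 : σ k = k := σ.injective h2
  omega

lemma perm_inv_fix {σ : Equiv.Perm ℕ} {M : ℕ} (hfix : ∀ k, M ≤ k → σ k = k) :
    ∀ k, M ≤ k → σ⁻¹ k = k := by
  intro k hk
  conv_lhs => rw [← hfix k hk]
  simp

/-- restrict a permutation of `ℕ` fixing `[M,∞)` to a permutation of `Fin M`. -/
def permRestrict (σ : Equiv.Perm ℕ) {M : ℕ} (hfix : ∀ k, M ≤ k → σ k = k) :
    Equiv.Perm (Fin M) where
  toFun i := ⟨σ i, perm_lt_of_lt hfix i.isLt⟩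
  invFun i := ⟨σ⁻¹ i, perm_lt_of_lt (perm_inv_fix hfix) i.isLt⟩
  left_inv i := by
    apply Fin.ext
    simp
  right_inv i := by
    apply Fin.ext
    simp


def embedX (d : ℕ) : Ed d → KK d := fun x =>
  ⟨(1 + ‖x‖)⁻¹ • x, by
    have h0 : (0:ℝ) < 1 + ‖x‖ := by positivity
    simp only [KK, Metric.mem_closedBall, dist_zero_right, norm_smul, norm_inv,
      Real.norm_eq_abs, abs_of_pos h0]
    rw [inv_mul_le_iff₀ h0]
    linarith [norm_nonneg x]⟩

def retrX (d : ℕ) : KK d → Ed d := fun y => (1 - ‖(y : Ed d)‖)⁻¹ • (y : Ed d)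

lemma retrX_embedX (x : Ed d) : retrX d (embedX d x) = x := by
  have h0 : (0:ℝ) < 1 + ‖x‖ := by positivity
  have hne : (1 + ‖x‖) ≠ 0 := ne_of_gt h0
  have hnorm : ‖((embedX d x : KK d) : Ed d)‖ = (1 + ‖x‖)⁻¹ * ‖x‖ := by
    simp [embedX, norm_smul, abs_of_pos h0]
  have hsub : (1 : ℝ) - (1 + ‖x‖)⁻¹ * ‖x‖ = (1 + ‖x‖)⁻¹ := by
    field_simp
    ring
  have hco : ((embedX d x : KK d) : Ed d) = (1 + ‖x‖)⁻¹ • x := rfl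
  rw [retrX, hnorm, hsub, hco, smul_smul, inv_inv, mul_inv_cancel₀ hne, one_smul]

lemma continuous_embedX : Continuous (embedX d) := by
  apply Continuous.subtype_mk
  exact (Continuous.inv₀ (by continuity) (fun x => (by positivity : (0:ℝ) < 1 + ‖x‖).ne')).smul continuous_id

lemma measurable_retrX : Measurable (retrX d) := by
  apply Measurable.fun_smul
  · exact (measurable_const.sub (continuous_subtype_val.measurable.norm)).inv
  · exact continuous_subtype_val.measurable

lemma nRep_all_to_infRep {d : ℕ} {μ₂ : Measure (Ed d × Ed d)} [IsProbabilityMeasure μ₂]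
    (h : ∀ N : ℕ, 2 ≤ N → NRep N μ₂) : InfRep μ₂ := by
  have hchoice : ∀ n : ℕ, ∃ γ : Measure (Fin (n+2) → Ed d), IsProbabilityMeasure γ ∧
      IsSymmetricN γ ∧ ∀ i j : Fin (n+2), i ≠ j → γ.map (fun x => (x i, x j)) = μ₂ :=
    fun n => h (n+2) (by omega)
  choose Γ hΓp hΓs hΓm using hchoice
  have hembm : ∀ n : ℕ, Measurable (fun (x : Fin (n+2) → Ed d) (k : ℕ) =>
      if hk : k < n+2 then embedX d (x ⟨k, hk⟩) else embedX d 0) := by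
    intro n
    apply measurable_pi_lambda
    intro k
    by_cases hk : k < n + 2
    · simp only [dif_pos hk]
      exact continuous_embedX.measurable.comp (measurable_pi_apply _)
    · simp only [dif_neg hk]
      exact measurable_const
  set ν : ℕ → Measure (XX d) := fun n => (Γ n).map (fun x k =>
      if hk : k < n+2 then embedX d (x ⟨k, hk⟩) else embedX d 0) with hνdef
  haveI hνp : ∀ N, IsProbabilityMeasure (ν N) := fun N => by
    have := hΓp N
    exact Measure.isProbabilityMeasure_map (hembm N).aemeasurable
  set 𝒰 : Ultrafilter ℕ := Ultrafilter.of atTop with h𝒰def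
  have h𝒰 : ↑𝒰 ≤ (atTop : Filter ℕ) := Ultrafilter.of_le _
  have hβm : Measurable (fun p : Ed d × Ed d => (embedX d p.1, embedX d p.2)) :=
    ((continuous_embedX.comp continuous_fst).prodMk
      (continuous_embedX.comp continuous_snd)).measurable
  set β : Measure (KK d × KK d) := μ₂.map (fun p => (embedX d p.1, embedX d p.2)) with hβ
  haveI : IsProbabilityMeasure β := Measure.isProbabilityMeasure_map hβm.aemeasurable
  -- eventual pair marginals
  have hpair : ∀ i j : ℕ, i ≠ j →
      ∀ᶠ N in atTop, (ν N).map (fun y : XX d => (y i, y j)) = β := by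
    intro i j hij
    filter_upwards [eventually_ge_atTop (max i j + 1)] with N hN
    have hi : i < N + 2 := by omega
    have hj : j < N + 2 := by omega
    have hπm : Measurable (fun y : XX d => (y i, y j)) :=
      (measurable_pi_apply i).prodMk (measurable_pi_apply j)
    have hpairFin : Measurable (fun x : Fin (N+2) → Ed d => (x ⟨i, hi⟩, x ⟨j, hj⟩)) :=
      (measurable_pi_apply _).prodMk (measurable_pi_apply _)
    rw [hνdef]
    rw [Measure.map_map hπm (hembm N)]
    have hcomp : ((fun y : XX d => (y i, y j)) ∘ (fun x (k : ℕ) =>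
        if hk : k < N+2 then embedX d (x ⟨k, hk⟩) else embedX d 0))
        = (fun p : Ed d × Ed d => (embedX d p.1, embedX d p.2)) ∘
          (fun x : Fin (N+2) → Ed d => (x ⟨i, hi⟩, x ⟨j, hj⟩)) := by
      funext x
      simp [Function.comp_apply, dif_pos hi, dif_pos hj]
    rw [hcomp, ← Measure.map_map hβm hpairFin, hΓm N ⟨i, hi⟩ ⟨j, hj⟩
      (fun hc => hij (by simpa using congrArg Fin.val hc))]
  -- eventual invariance
  have hinv : ∀ σ : Equiv.Perm ℕ, {n | σ n ≠ n}.Finite →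
      ∀ᶠ N in atTop, (ν N).map (fun (y : XX d) n => y (σ n)) = ν N := by
    intro σ hσ
    obtain ⟨m, hm⟩ := hσ.bddAbove
    have hfix : ∀ k, m + 1 ≤ k → σ k = k := by
      intro k hk
      by_contra hne
      have := hm (Set.mem_setOf.mpr hne)
      omega
    filter_upwards [eventually_ge_atTop m] with N hN
    have hfixN : ∀ k, N + 2 ≤ k → σ k = k := fun k hk => hfix k (by omega)
    set σ' := permRestrict σ hfixN with hσ'
    have hpermK : Measurable (fun (y : XX d) n => y (σ n)) :=
      measurable_pi_lambda _ fun n => measurable_pi_apply _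
    have hpermFin : Measurable (fun (x : Fin (N+2) → Ed d) i => x (σ' i)) :=
      measurable_pi_lambda _ fun i => measurable_pi_apply _
    rw [hνdef]
    rw [Measure.map_map hpermK (hembm N)]
    have hcomp : ((fun (y : XX d) n => y (σ n)) ∘ (fun x (k : ℕ) =>
        if hk : k < N+2 then embedX d (x ⟨k, hk⟩) else embedX d 0))
        = (fun x (k : ℕ) => if hk : k < N+2 then embedX d (x ⟨k, hk⟩) else embedX d 0) ∘
          (fun (x : Fin (N+2) → Ed d) i => x (σ' i)) := by
      funext x
      funext k
      simp only [Function.comp_apply]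
      by_cases hk : k < N + 2
      · have hσk : σ k < N + 2 := perm_lt_of_lt hfixN hk
        rw [dif_pos hσk, dif_pos hk]
        rfl
      · have hσk : ¬ σ k < N + 2 := by
          rw [hfixN k (by omega)]
          exact hk
        rw [dif_neg hσk, dif_neg hk]
    rw [hcomp, ← Measure.map_map (hembm N) hpermFin, hΓs N σ']
  -- pull back the limit measure
  have hRm : Measurable (fun (y : XX d) n => retrX d (y n)) :=
    measurable_pi_lambda _ fun n => measurable_retrX.comp (measurable_pi_apply n)
  refine ⟨(limMeasure ν 𝒰).map (fun (y : XX d) n => retrX d (y n)),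
    Measure.isProbabilityMeasure_map hRm.aemeasurable, ?_, ?_⟩
  · intro σ hσ
    have hperm : Measurable (fun (x : ℕ → Ed d) n => x (σ n)) :=
      measurable_pi_lambda _ fun n => measurable_pi_apply _
    have hpermK : Measurable (fun (y : XX d) n => y (σ n)) :=
      measurable_pi_lambda _ fun n => measurable_pi_apply _
    rw [Measure.map_map hperm hRm]
    have hcomp : ((fun (x : ℕ → Ed d) n => x (σ n)) ∘ (fun (y : XX d) n => retrX d (y n)))
        = (fun (y : XX d) n => retrX d (y n)) ∘ (fun (y : XX d) n => y (σ n)) := rfl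
    rw [hcomp, ← Measure.map_map hRm hpermK, limMeasure_perm ν 𝒰 σ h𝒰 (hinv σ hσ)]
  · intro i j hij
    have hpairEd : Measurable (fun (x : ℕ → Ed d) => (x i, x j)) :=
      (measurable_pi_apply i).prodMk (measurable_pi_apply j)
    have hπm : Measurable (fun y : XX d => (y i, y j)) :=
      (measurable_pi_apply i).prodMk (measurable_pi_apply j)
    have hrrm : Measurable (fun p : KK d × KK d => (retrX d p.1, retrX d p.2)) :=
      (measurable_retrX.comp measurable_fst).prodMk (measurable_retrX.comp measurable_snd)
    rw [Measure.map_map hpairEd hRm]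
    have hcomp : ((fun (x : ℕ → Ed d) => (x i, x j)) ∘ (fun (y : XX d) n => retrX d (y n)))
        = (fun p : KK d × KK d => (retrX d p.1, retrX d p.2)) ∘
          (fun y : XX d => (y i, y j)) := rfl
    rw [hcomp, ← Measure.map_map hrrm hπm,
      limMeasure_pair ν 𝒰 i j β h𝒰 (hpair i j hij), hβ, Measure.map_map hrrm hβm]
    have hid : ((fun p : KK d × KK d => (retrX d p.1, retrX d p.2)) ∘
        (fun p : Ed d × Ed d => (embedX d p.1, embedX d p.2))) = id := by
      funext p
      simp [Function.comp_apply, retrX_embedX]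
    rw [hid, Measure.map_id]

/-- extend a permutation of `Fin N` to a permutation of `ℕ` fixing everything `≥ N`. -/
def permExtend {N : ℕ} (σ : Equiv.Perm (Fin N)) : Equiv.Perm ℕ :=
  σ.extendDomain (Fin.equivSubtype (n := N))

lemma permExtend_lt {N : ℕ} (σ : Equiv.Perm (Fin N)) {i : ℕ} (h : i < N) :
    permExtend σ i = (σ ⟨i, h⟩ : Fin N) := by
  have := Equiv.Perm.extendDomain_apply_subtype σ (Fin.equivSubtype (n := N)) (b := i) h
  simpa [permExtend, Fin.equivSubtype] using this

lemma permExtend_ge {N : ℕ} (σ : Equiv.Perm (Fin N)) {i : ℕ} (h : ¬ i < N) :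
    permExtend σ i = i :=
  Equiv.Perm.extendDomain_apply_not_subtype σ (Fin.equivSubtype (n := N)) h

lemma permExtend_finite {N : ℕ} (σ : Equiv.Perm (Fin N)) :
    {n : ℕ | permExtend σ n ≠ n}.Finite := by
  apply Set.Finite.subset (Set.finite_Iio N)
  intro n hn
  by_contra hge
  exact hn (permExtend_ge σ (by simpa [Set.mem_Iio] using hge))


lemma infRep_to_nRep {d : ℕ} {μ₂ : Measure (Ed d × Ed d)} (h : InfRep μ₂) (N : ℕ) :
    NRep N μ₂ := by
  obtain ⟨γ, hγp, hγe, hγm⟩ := h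
  have hproj : Measurable (fun (x : ℕ → Ed d) (i : Fin N) => x (i : ℕ)) :=
    measurable_pi_lambda _ fun i => measurable_pi_apply _
  refine ⟨γ.map (fun x (i : Fin N) => x (i : ℕ)), Measure.isProbabilityMeasure_map hproj.aemeasurable,
    ?_, ?_⟩
  · intro σ
    have hperm : Measurable (fun (y : Fin N → Ed d) (i : Fin N) => y (σ i)) :=
      measurable_pi_lambda _ fun i => measurable_pi_apply _
    have hpermN : Measurable (fun (x : ℕ → Ed d) (n : ℕ) => x (permExtend σ n)) :=
      measurable_pi_lambda _ fun i => measurable_pi_apply _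
    rw [Measure.map_map hperm hproj]
    have hcomp : ((fun (y : Fin N → Ed d) (i : Fin N) => y (σ i)) ∘
        (fun (x : ℕ → Ed d) (i : Fin N) => x (i : ℕ)))
        = (fun (x : ℕ → Ed d) (i : Fin N) => x (i : ℕ)) ∘
          (fun (x : ℕ → Ed d) (n : ℕ) => x (permExtend σ n)) := by
      funext x
      funext i
      simp only [Function.comp_apply]
      rw [permExtend_lt σ i.isLt]
    rw [hcomp, ← Measure.map_map hproj hpermN, hγe (permExtend σ) (permExtend_finite σ)]
  · intro i j hij
    have hpair : Measurable (fun (y : Fin N → Ed d) => (y i, y j)) :=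
      (measurable_pi_apply _).prodMk (measurable_pi_apply _)
    rw [Measure.map_map hpair hproj]
    exact hγm i j (fun hc => hij (Fin.val_injective hc))

end Aux3p3

/-- Lemma 3.3: a symmetric Borel probability measure on `ℝ^d × ℝ^d` is infinitely
representable if and only if it is `N`-representable for every `N ≥ 2`. -/
theorem infRep_iff_nRep_forall
    {d : ℕ} (μ₂ : Measure (Ed d × Ed d)) [IsProbabilityMeasure μ₂]
    (hsymm : μ₂.map Prod.swap = μ₂) :
    InfRep μ₂ ↔ ∀ N : ℕ, 2 ≤ N → NRep N μ₂ := by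
  exact ⟨fun hinf N _ => infRep_to_nRep hinf N, fun hall => nRep_all_to_infRep hall⟩
end
end
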